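/- arXiv:1009.0886 — 6 statements merged into one kernel-verified Lean document; each statement's English description precedes it below -/
import Mathlib

section
/- If w ∈ S_n is 321-avoiding, then no reduced decomposition of w contains a consecutive substring of the form (i, i+1, i) or (i+1, i, i+1); equivalently, all reduced decompositions of w lie in a single commutation class. -/
/-- The adjacent transposition `s_i` of `S_n` (1-based: swaps positions `i` and `i+1`). -/
def adjT (n : ℕ) (i : ℕ) : Equiv.Perm (Fin n) :=
  if h : 1 ≤ i ∧ i < n then Equiv.swap ⟨i - 1, by omega⟩ ⟨i, h.2⟩ else 1

/-- The number of inversions of a permutation of `Fin n`. -/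
def invCount (n : ℕ) (w : Equiv.Perm (Fin n)) : ℕ :=
  (Finset.univ.filter fun p : Fin n × Fin n => p.1 < p.2 ∧ w p.2 < w p.1).card

/-- `ρ` is a reduced decomposition of `w`: a word of length `inv(w)` in the letters
`1, …, n-1` whose product of adjacent transpositions is `w`. -/
def IsReducedDecomp (n : ℕ) (w : Equiv.Perm (Fin n)) (ρ : List ℕ) : Prop :=
  (∀ r ∈ ρ, 1 ≤ r ∧ r < n) ∧ (ρ.map (adjT n)).prod = w ∧ ρ.length = invCount n w

/-- A short braid move: swapping two adjacent letters differing by at least 2. -/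
def ShortBraidMove (ρ ρ' : List ℕ) : Prop :=
  ∃ l r : List ℕ, ∃ a b : ℕ, (a + 2 ≤ b ∨ b + 2 ≤ a) ∧
    ρ = l ++ [a, b] ++ r ∧ ρ' = l ++ [b, a] ++ r

/-- Two words are in the same commutation class iff related by short braid moves. -/
def CommEquiv : List ℕ → List ℕ → Prop := Relation.ReflTransGen ShortBraidMove

/-- A long braid move: `(i+1, i, i+1) ↔ (i, i+1, i)` on a consecutive substring. -/
def LongBraidMove (ρ ρ' : List ℕ) : Prop :=
  ∃ l r : List ℕ, ∃ i : ℕ,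
    (ρ = l ++ [i + 1, i, i + 1] ++ r ∧ ρ' = l ++ [i, i + 1, i] ++ r) ∨
    (ρ = l ++ [i, i + 1, i] ++ r ∧ ρ' = l ++ [i + 1, i, i + 1] ++ r)

/-- The number of commutation classes of reduced decompositions of `w`. -/
noncomputable def numCommClasses (n : ℕ) (w : Equiv.Perm (Fin n)) : ℕ :=
  Nat.card (Quot fun a b : {ρ : List ℕ // IsReducedDecomp n w ρ} => CommEquiv a.1 b.1)

/-- The arrangement (position ↦ value) after the first `k` steps of the word `ρ`. -/
def prefixPerm (n : ℕ) (ρ : List ℕ) (k : ℕ) : Equiv.Perm (Fin n) :=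
  ((ρ.take k).map (adjT n)).prod

/-- The word induced by `ρ` on a set `A` of values: record, in order, each step of `ρ`
swapping two values of `A`, labeled (1-based) by the relative position of the swapped
pair among the values of `A`. -/
def inducedWord (n : ℕ) (ρ : List ℕ) (A : Finset (Fin n)) : List ℕ :=
  (List.range ρ.length).filterMap fun k =>
    let u := prefixPerm n ρ k
    let i := ρ.getD k 0
    if h : 1 ≤ i ∧ i < n then
      if u ⟨i - 1, by omega⟩ ∈ A ∧ u ⟨i, h.2⟩ ∈ A then
        some ((A.filter fun x => (u.symm x : ℕ) < i - 1).card + 1)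
      else none
    else none

/-- The number of `(2,1,2)`-subnetworks of `ρ`. -/
def count212 (n : ℕ) (ρ : List ℕ) : ℕ :=
  (Finset.univ.filter fun A : Finset (Fin n) =>
    A.card = 3 ∧ inducedWord n ρ A = [2, 1, 2]).card

/-- The number of 321-patterns of `w`. -/
def N321 (n : ℕ) (w : Equiv.Perm (Fin n)) : ℕ :=
  (Finset.univ.filter fun t : Fin n × Fin n × Fin n =>
    t.1 < t.2.1 ∧ t.2.1 < t.2.2 ∧ w t.2.2 < w t.2.1 ∧ w t.2.1 < w t.1).card

/-!
Every letter of a reduced word is a right descent of the product up to it, so a reduced word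
ending in `i, i+1, i` makes both `i` and `i+1` right descents of its product (the braid relation
gives a second reduced word ending in `i+1`), i.e. the three values in positions `i-1, i, i+1`
decrease. Appending letters of a reduced word never undoes an inversion, so that `321` pattern
survives in `w`. For the commutation classes, compare the last letters `a`, `b` of two reduced
words of a `321`-avoiding `w` by induction on the length: `|a - b| = 1` is excluded by the same
pattern argument, `a = b` is immediate, and for `|a - b| ≥ 2` both words are commutation
equivalent to a common word ending in `b, a` resp. `a, b`.
-/

section ReducedDecomp

variable {n : ℕ}

lemma adjT_of_lt {a : ℕ} (h1 : 1 ≤ a) (h2 : a < n) :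
    adjT n a = Equiv.swap ⟨a - 1, by omega⟩ ⟨a, h2⟩ :=
  dif_pos ⟨h1, h2⟩

@[simp]
lemma adjT_mul_self (a : ℕ) : adjT n a * adjT n a = 1 := by
  unfold adjT; split_ifs <;> simp

lemma adjT_mul_comm {a b : ℕ} (hab : a + 2 ≤ b ∨ b + 2 ≤ a) :
    adjT n a * adjT n b = adjT n b * adjT n a := by
  unfold adjT
  split_ifs <;> try simp only [mul_one, one_mul]
  refine (Equiv.Perm.disjoint_swap_swap ?_).commute.eq
  simp only [List.nodup_cons, List.mem_cons, List.not_mem_nil, List.nodup_nil, Fin.ext_iff,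
    or_false, not_false_eq_true, and_true]
  omega

lemma adjT_braid {a : ℕ} (h1 : 1 ≤ a) (h2 : a + 1 < n) :
    adjT n a * adjT n (a + 1) * adjT n a = adjT n (a + 1) * adjT n a * adjT n (a + 1) := by
  rw [adjT_of_lt h1 (by omega), adjT_of_lt (by omega) h2]
  set p : Fin n := ⟨a - 1, by omega⟩
  set q : Fin n := ⟨a, by omega⟩
  set r : Fin n := ⟨a + 1, h2⟩
  have hpq : p ≠ q := Fin.ne_of_val_ne (by dsimp [p, q]; omega)
  have hpr : p ≠ r := Fin.ne_of_val_ne (by dsimp [p, r]; omega)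
  have hqr : q ≠ r := Fin.ne_of_val_ne (by dsimp [q, r]; omega)
  change Equiv.swap p q * Equiv.swap q r * Equiv.swap p q
    = Equiv.swap q r * Equiv.swap p q * Equiv.swap q r
  have lhs := Equiv.swap_mul_swap_mul_swap hqr.symm hpr.symm
  have rhs := Equiv.swap_mul_swap_mul_swap hpq hpr
  rw [Equiv.swap_comm r q, Equiv.swap_comm q p] at lhs
  rw [lhs, rhs, Equiv.swap_comm]

lemma swap_lt_swap_of_lt {p q a b : Fin n} (hab : (b : ℕ) = a + 1) (hpq : p < q)
    (hne : ¬(p = a ∧ q = b)) : Equiv.swap a b p < Equiv.swap a b q := by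
  simp only [Equiv.swap_apply_def]
  split_ifs <;> simp only [Fin.ext_iff, Fin.lt_def] at * <;> omega

lemma invCount_mul_swap_of_lt {u : Equiv.Perm (Fin n)} {a b : Fin n} (hab : (b : ℕ) = a + 1)
    (hasc : u a < u b) : invCount n (u * Equiv.swap a b) = invCount n u + 1 := by
  have hba : ¬ b < a := by rw [Fin.lt_def]; omega
  have hne : a ≠ b := Fin.ne_of_val_ne (by omega)
  have hnot : (b, a) ∉ Finset.univ.filter fun p : Fin n × Fin n => p.1 < p.2 ∧ u p.2 < u p.1 := by
    simp [hba]
  rw [invCount, invCount, ← Finset.card_insert_of_notMem hnot]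
  refine (Finset.card_equiv ((Equiv.swap a b).prodCongr (Equiv.swap a b)) fun ⟨x, y⟩ => ?_).symm
  simp only [Finset.mem_insert, Finset.mem_filter_univ, Prod.mk.injEq, Equiv.prodCongr_apply,
    Prod.map]
  simp only [Equiv.Perm.mul_apply, Equiv.swap_apply_self]
  by_cases hxy : x = a ∧ y = b
  · obtain ⟨rfl, rfl⟩ := hxy
    simp [hba, hasc.not_gt, hne]
  by_cases hyx : x = b ∧ y = a
  · obtain ⟨rfl, rfl⟩ := hyx
    simp [hasc, hab, Fin.lt_def]
  rw [or_iff_right hyx]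
  refine and_congr_left fun _ => ⟨fun h => swap_lt_swap_of_lt hab h hxy, fun h => ?_⟩
  simpa using swap_lt_swap_of_lt hab h (by simpa [Equiv.swap_apply_eq_iff] using hyx)

def IsRightDescent (w : Equiv.Perm (Fin n)) (a : ℕ) : Prop :=
  ∃ h : 1 ≤ a ∧ a < n, w ⟨a, h.2⟩ < w ⟨a - 1, by omega⟩

lemma IsRightDescent.invCount_mul_adjT {w : Equiv.Perm (Fin n)} {a : ℕ}
    (h : IsRightDescent w a) : invCount n (w * adjT n a) + 1 = invCount n w := by
  obtain ⟨⟨h1, h2⟩, hdesc⟩ := h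
  rw [adjT_of_lt h1 h2]
  set p : Fin n := ⟨a - 1, by omega⟩
  set q : Fin n := ⟨a, h2⟩
  have := invCount_mul_swap_of_lt (u := w * Equiv.swap p q) (a := p) (b := q)
    (by dsimp [p, q]; omega) (by simpa using hdesc)
  rwa [mul_assoc, Equiv.swap_mul_self, mul_one, eq_comm] at this

lemma invCount_mul_adjT_of_not_isRightDescent {w : Equiv.Perm (Fin n)} {a : ℕ} (h1 : 1 ≤ a)
    (h2 : a < n) (h : ¬ IsRightDescent w a) : invCount n (w * adjT n a) = invCount n w + 1 := by
  have hasc : w ⟨a - 1, by omega⟩ < w ⟨a, h2⟩ := by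
    refine lt_of_le_of_ne (not_lt.1 fun hd => h ⟨⟨h1, h2⟩, hd⟩) fun heq => ?_
    have := congrArg Fin.val (w.injective heq)
    simp only at this
    omega
  have hdesc : IsRightDescent (w * adjT n a) a := ⟨⟨h1, h2⟩, by simpa [adjT_of_lt h1 h2] using hasc⟩
  have := hdesc.invCount_mul_adjT
  rwa [mul_assoc, adjT_mul_self, mul_one, eq_comm] at this

lemma isRightDescent_of_invCount_mul_adjT_lt {w : Equiv.Perm (Fin n)} {a : ℕ} (h1 : 1 ≤ a)
    (h2 : a < n) (hlt : invCount n (w * adjT n a) < invCount n w) : IsRightDescent w a := by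
  by_contra h
  have := invCount_mul_adjT_of_not_isRightDescent h1 h2 h
  omega

lemma invCount_mul_adjT_le (w : Equiv.Perm (Fin n)) {a : ℕ} (h1 : 1 ≤ a) (h2 : a < n) :
    invCount n (w * adjT n a) ≤ invCount n w + 1 := by
  by_cases h : IsRightDescent w a
  · have := h.invCount_mul_adjT
    omega
  · exact (invCount_mul_adjT_of_not_isRightDescent h1 h2 h).le

@[simp]
lemma invCount_one : invCount n 1 = 0 := by
  rw [invCount, Finset.card_eq_zero, Finset.filter_eq_empty_iff]
  exact fun p _ h => lt_asymm h.1 h.2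

lemma invCount_prod_le {ρ : List ℕ} (hρ : ∀ r ∈ ρ, 1 ≤ r ∧ r < n) :
    invCount n (ρ.map (adjT n)).prod ≤ ρ.length := by
  induction ρ using List.reverseRecOn with
  | nil => simp
  | append_singleton ρ a ih =>
    have ha := hρ a (by simp)
    have := invCount_mul_adjT_le (ρ.map (adjT n)).prod ha.1 ha.2
    have := ih fun r hr => hρ r (by simp [hr])
    simp only [List.map_append, List.map_singleton, List.prod_append, List.prod_singleton,
      List.length_append, List.length_singleton]
    omega

lemma isReducedDecomp_concat_iff {w : Equiv.Perm (Fin n)} {ρ : List ℕ} {a : ℕ} :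
    IsReducedDecomp n w (ρ ++ [a]) ↔
      IsRightDescent w a ∧ IsReducedDecomp n (w * adjT n a) ρ := by
  have hprod : (ρ.map (adjT n)).prod * adjT n a = w ↔ (ρ.map (adjT n)).prod = w * adjT n a := by
    constructor <;> intro h
    · rw [← h, mul_assoc, adjT_mul_self, mul_one]
    · rw [h, mul_assoc, adjT_mul_self, mul_one]
  simp only [IsReducedDecomp, List.mem_append, List.mem_singleton, List.map_append,
    List.map_singleton, List.prod_append, List.prod_singleton, List.length_append,
    List.length_singleton, hprod]
  constructor
  · rintro ⟨hletters, hw, hlen⟩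
    have ha := hletters a (Or.inr rfl)
    have hle := invCount_prod_le fun r hr => hletters r (Or.inl hr)
    rw [hw] at hle
    have hdesc := isRightDescent_of_invCount_mul_adjT_lt (w := w) ha.1 ha.2 (by omega)
    have := hdesc.invCount_mul_adjT
    exact ⟨hdesc, fun r hr => hletters r (Or.inl hr), hw, by omega⟩
  · rintro ⟨hdesc, hletters, hw, hlen⟩
    have := hdesc.invCount_mul_adjT
    refine ⟨fun r => ?_, hw, by omega⟩
    rintro (hr | rfl)
    exacts [hletters r hr, hdesc.1]

lemma eq_one_of_forall_not_isRightDescent {w : Equiv.Perm (Fin n)}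
    (h : ∀ a, ¬ IsRightDescent w a) : w = 1 := by
  cases n with
  | zero => exact Subsingleton.elim _ _
  | succ m =>
    have hmono : StrictMono w := Fin.strictMono_iff_lt_succ.2 fun i => by
      refine lt_of_le_of_ne (not_lt.1 fun hd => h (i + 1) ⟨⟨by omega, by omega⟩, hd⟩) ?_
      exact w.injective.ne Fin.castSucc_lt_succ.ne
    exact Equiv.ext (congrFun ((hmono.range_inj strictMono_id).1 (by simp)))

lemma exists_isReducedDecomp (w : Equiv.Perm (Fin n)) : ∃ ρ, IsReducedDecomp n w ρ := by
  induction hN : invCount n w using Nat.strong_induction_on generalizing w with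
  | _ N ih =>
    by_cases hd : ∃ a, IsRightDescent w a
    · obtain ⟨a, ha⟩ := hd
      obtain ⟨ρ, hρ⟩ := ih _ (by have := ha.invCount_mul_adjT; omega) (w * adjT n a) rfl
      exact ⟨ρ ++ [a], isReducedDecomp_concat_iff.2 ⟨ha, hρ⟩⟩
    · rw [eq_one_of_forall_not_isRightDescent (not_exists.1 hd)]
      exact ⟨[], by simp [IsReducedDecomp]⟩

lemma IsReducedDecomp.exists_concat {w : Equiv.Perm (Fin n)} {ρ : List ℕ}
    (h : IsReducedDecomp n w ρ) (hw : invCount n w ≠ 0) :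
    ∃ ρ₀ a, ρ = ρ₀ ++ [a] ∧ IsRightDescent w a ∧ IsReducedDecomp n (w * adjT n a) ρ₀ := by
  rcases ρ.eq_nil_or_concat' with rfl | ⟨ρ₀, a, rfl⟩
  · exact absurd h.2.2.symm hw
  · exact ⟨ρ₀, a, rfl, isReducedDecomp_concat_iff.1 h⟩

lemma IsReducedDecomp.of_append {w : Equiv.Perm (Fin n)} {σ τ : List ℕ}
    (h : IsReducedDecomp n w (σ ++ τ)) : IsReducedDecomp n (σ.map (adjT n)).prod σ := by
  induction τ using List.reverseRecOn generalizing w with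
  | nil =>
    rw [List.append_nil] at h
    rwa [h.2.1]
  | append_singleton τ a ih =>
    rw [← List.append_assoc, isReducedDecomp_concat_iff] at h
    exact ih h.2

lemma isReducedDecomp_braid_iff {w : Equiv.Perm (Fin n)} {l r : List ℕ} {i : ℕ} :
    IsReducedDecomp n w (l ++ [i, i + 1, i] ++ r) ↔
      IsReducedDecomp n w (l ++ [i + 1, i, i + 1] ++ r) := by
  have hmem : ∀ x, x ∈ l ++ [i, i + 1, i] ++ r ↔ x ∈ l ++ [i + 1, i, i + 1] ++ r := by
    simp only [List.mem_append, List.mem_cons, List.not_mem_nil]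
    tauto
  have hlen : (l ++ [i, i + 1, i] ++ r).length = (l ++ [i + 1, i, i + 1] ++ r).length := by simp
  simp only [IsReducedDecomp, hmem, hlen]
  refine and_congr_right fun hletters => ?_
  have hi := hletters i (by simp)
  have hi' := hletters (i + 1) (by simp)
  simp only [List.map_append, List.prod_append, List.map_cons, List.map_nil, List.prod_cons,
    List.prod_nil, mul_one]
  rw [← mul_assoc (adjT n i), adjT_braid hi.1 hi'.2, mul_assoc (adjT n (i + 1))]

def Has321 (w : Equiv.Perm (Fin n)) : Prop :=
  ∃ a b c : Fin n, a < b ∧ b < c ∧ w c < w b ∧ w b < w a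

lemma has321_of_isRightDescent_succ {w : Equiv.Perm (Fin n)} {a : ℕ} (ha : IsRightDescent w a)
    (ha' : IsRightDescent w (a + 1)) : Has321 w := by
  obtain ⟨⟨h1, h2⟩, hd⟩ := ha
  obtain ⟨⟨_, h3⟩, hd'⟩ := ha'
  exact ⟨⟨a - 1, by omega⟩, ⟨a, h2⟩, ⟨a + 1, h3⟩, Fin.mk_lt_mk.2 (by omega),
    Fin.mk_lt_mk.2 (by omega), hd', hd⟩

lemma IsRightDescent.has321_of_mul_adjT {w : Equiv.Perm (Fin n)} {a : ℕ}
    (ha : IsRightDescent w a) (h : Has321 (w * adjT n a)) : Has321 w := by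
  obtain ⟨⟨h1, h2⟩, hd⟩ := ha
  obtain ⟨p, q, r, hpq, hqr, hrq, hqp⟩ := h
  rw [adjT_of_lt h1 h2] at hrq hqp
  set σ := Equiv.swap (⟨a - 1, by omega⟩ : Fin n) ⟨a, h2⟩
  have key : ∀ x y, x < y → w (σ y) < w (σ x) → σ x < σ y := by
    refine fun x y hxy hinv => swap_lt_swap_of_lt (by simp only; omega) hxy ?_
    rintro ⟨rfl, rfl⟩
    simp only [σ, Equiv.swap_apply_left, Equiv.swap_apply_right] at hinv
    exact hinv.asymm hd
  exact ⟨σ p, σ q, σ r, key p q hpq hqp, key q r hqr hrq, hrq, hqp⟩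

lemma IsReducedDecomp.has321_of_append {w : Equiv.Perm (Fin n)} {σ τ : List ℕ}
    (h : IsReducedDecomp n w (σ ++ τ)) (hσ : Has321 (σ.map (adjT n)).prod) : Has321 w := by
  induction τ using List.reverseRecOn generalizing w with
  | nil =>
    rw [List.append_nil] at h
    rwa [← h.2.1]
  | append_singleton τ a ih =>
    rw [← List.append_assoc, isReducedDecomp_concat_iff] at h
    exact h.1.has321_of_mul_adjT (ih h.2)

lemma IsReducedDecomp.has321_of_braid_suffix {w : Equiv.Perm (Fin n)} {l : List ℕ} {i : ℕ}
    (h : IsReducedDecomp n w (l ++ [i, i + 1, i])) : Has321 w := by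
  have h' := (isReducedDecomp_braid_iff (r := [])).1 (by simpa using h)
  have hi := (isReducedDecomp_concat_iff (ρ := l ++ [i, i + 1])).1 (by simpa using h)
  have hi' := (isReducedDecomp_concat_iff (ρ := l ++ [i + 1, i])).1 (by simpa using h')
  exact has321_of_isRightDescent_succ hi.1 hi'.1

lemma IsReducedDecomp.has321_of_braid_factor {w : Equiv.Perm (Fin n)} {l r : List ℕ} {i : ℕ}
    (h : IsReducedDecomp n w (l ++ [i, i + 1, i] ++ r)) : Has321 w :=
  h.has321_of_append h.of_append.has321_of_braid_suffix

instance : Std.Symm ShortBraidMove where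
  symm := fun _ _ ⟨l, r, a, b, hab, hx, hy⟩ => ⟨l, r, b, a, hab.symm, hy, hx⟩

lemma CommEquiv.symm {ρ ρ' : List ℕ} (h : CommEquiv ρ ρ') : CommEquiv ρ' ρ :=
  Std.Symm.symm (r := Relation.ReflTransGen ShortBraidMove) _ _ h

lemma CommEquiv.append_right {ρ ρ' : List ℕ} (h : CommEquiv ρ ρ') (t : List ℕ) :
    CommEquiv (ρ ++ t) (ρ' ++ t) :=
  Relation.ReflTransGen.lift (· ++ t)
    (fun _ _ ⟨l, r, a, b, hab, hx, hy⟩ => ⟨l, r ++ t, a, b, hab, by simp [hx], by simp [hy]⟩) _ _ h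

lemma IsRightDescent.mul_adjT_of_far {w : Equiv.Perm (Fin n)} {a b : ℕ} (hb : IsRightDescent w b)
    (hab : a + 2 ≤ b ∨ b + 2 ≤ a) : IsRightDescent (w * adjT n a) b := by
  obtain ⟨hb', hd⟩ := hb
  refine ⟨hb', ?_⟩
  unfold adjT
  split_ifs
  · simp only [Equiv.Perm.mul_apply]
    rwa [Equiv.swap_apply_of_ne_of_ne, Equiv.swap_apply_of_ne_of_ne] <;>
      simp only [ne_eq, Fin.ext_iff] <;> omega
  · rwa [mul_one]

lemma exists_isReducedDecomp_concat_of_far {w : Equiv.Perm (Fin n)} {a b : ℕ}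
    (ha : IsRightDescent w a) (hb : IsRightDescent w b) (hab : a + 2 ≤ b ∨ b + 2 ≤ a) :
    ∃ τ, IsReducedDecomp n (w * adjT n a) (τ ++ [b]) ∧
      IsReducedDecomp n (w * adjT n b) (τ ++ [a]) := by
  obtain ⟨τ, hτ⟩ := exists_isReducedDecomp (w * adjT n a * adjT n b)
  refine ⟨τ, isReducedDecomp_concat_iff.2 ⟨hb.mul_adjT_of_far hab, hτ⟩,
    isReducedDecomp_concat_iff.2 ⟨ha.mul_adjT_of_far hab.symm, ?_⟩⟩
  rwa [mul_assoc, ← adjT_mul_comm hab, ← mul_assoc]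

lemma commEquiv_of_not_has321 {w : Equiv.Perm (Fin n)} (hw : ¬ Has321 w) {ρ ρ' : List ℕ}
    (h : IsReducedDecomp n w ρ) (h' : IsReducedDecomp n w ρ') : CommEquiv ρ ρ' := by
  obtain ⟨N, hN⟩ : ∃ N, invCount n w = N := ⟨_, rfl⟩
  induction N generalizing w ρ ρ' with
  | zero =>
    rw [List.eq_nil_of_length_eq_zero (h.2.2.trans hN),
      List.eq_nil_of_length_eq_zero (h'.2.2.trans hN)]
    exact Relation.ReflTransGen.refl
  | succ N ih =>
    obtain ⟨ρ, a, rfl, ha, hρ⟩ := h.exists_concat (by omega)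
    obtain ⟨ρ', b, rfl, hb, hρ'⟩ := h'.exists_concat (by omega)
    have hNa : invCount n (w * adjT n a) = N := by have := ha.invCount_mul_adjT; omega
    have hNb : invCount n (w * adjT n b) = N := by have := hb.invCount_mul_adjT; omega
    have hwa := mt ha.has321_of_mul_adjT hw
    have hwb := mt hb.has321_of_mul_adjT hw
    rcases (by omega : a = b ∨ (a + 2 ≤ b ∨ b + 2 ≤ a) ∨ b = a + 1 ∨ a = b + 1)
      with rfl | hab | rfl | rfl
    · exact (ih hwa hρ hρ' hNa).append_right [a]
    · obtain ⟨τ, hτb, hτa⟩ := exists_isReducedDecomp_concat_of_far ha hb hab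
      have hswap : ShortBraidMove (τ ++ [b] ++ [a]) (τ ++ [a] ++ [b]) :=
        ⟨τ, [], b, a, hab.symm, by simp, by simp⟩
      exact ((ih hwa hρ hτb hNa).append_right [a]).trans <|
        (Relation.ReflTransGen.single hswap).trans ((ih hwb hρ' hτa hNb).append_right [b]).symm
    · exact absurd (has321_of_isRightDescent_succ ha hb) hw
    · exact absurd (has321_of_isRightDescent_succ hb ha) hw

end ReducedDecomp

/-- If `w` is 321-avoiding then no reduced decomposition of `w` contains a
consecutive substring `(i, i+1, i)` or `(i+1, i, i+1)`; equivalently, all reduced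
decompositions of `w` lie in a single commutation class. -/
theorem avoiding321_single_commutation_class
    (n : ℕ) (w : Equiv.Perm (Fin n))
    (hav : ¬ ∃ a b c : Fin n, a < b ∧ b < c ∧ w c < w b ∧ w b < w a) :
    (∀ ρ : List ℕ, IsReducedDecomp n w ρ →
      ¬ ∃ (l r : List ℕ) (i : ℕ),
        ρ = l ++ [i, i + 1, i] ++ r ∨ ρ = l ++ [i + 1, i, i + 1] ++ r) ∧
    (∀ ρ ρ' : List ℕ, IsReducedDecomp n w ρ → IsReducedDecomp n w ρ' →
      CommEquiv ρ ρ') := by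
  refine ⟨fun ρ hρ => ?_, fun ρ ρ' hρ hρ' => commEquiv_of_not_has321 hav hρ hρ'⟩
  rintro ⟨l, r, i, rfl | rfl⟩
  · exact hav hρ.has321_of_braid_factor
  · exact hav (isReducedDecomp_braid_iff.2 hρ).has321_of_braid_factor
end

section
/- Every commutation class of reduced decompositions of w ∈ S_n contains a representative element: a reduced decomposition such that whenever two letters i and j with i - j ≥ 2 occur in consecutive positions, i occurs to the left of j. -/
/-- Weight measure: sum of index * value. -/
def wtM : List ℕ → ℕ
  | [] => 0
  | _ :: t => t.sum + wtM t

lemma wtM_append (l m : List ℕ) : wtM (l ++ m) = wtM l + l.length * m.sum + wtM m := by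
  induction l with
  | nil => simp [wtM]
  | cons a t ih => simp [wtM, ih]; ring

lemma wtM_swap (l r : List ℕ) (x y : ℕ) :
    wtM (l ++ [y, x] ++ r) + y = wtM (l ++ [x, y] ++ r) + x := by
  simp [wtM_append, wtM, List.sum_cons]
  ring

lemma adjT_comm (n x y : ℕ) (hxy : x + 2 ≤ y) :
    adjT n x * adjT n y = adjT n y * adjT n x := by
  unfold adjT
  by_cases hx : 1 ≤ x ∧ x < n
  · by_cases hy : 1 ≤ y ∧ y < n
    · simp only [dif_pos hx, dif_pos hy]
      have hd : (Equiv.swap (⟨x - 1, by omega⟩ : Fin n) ⟨x, hx.2⟩).Disjoint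
          (Equiv.swap (⟨y - 1, by omega⟩ : Fin n) ⟨y, hy.2⟩) := by
        intro z
        by_cases hz : z = (⟨x - 1, by omega⟩ : Fin n) ∨ z = (⟨x, hx.2⟩ : Fin n)
        · right
          apply Equiv.swap_apply_of_ne_of_ne
          · rcases hz with hz | hz <;> subst hz <;>
              (intro hc; have := congrArg (Fin.val) hc; simp at this; omega)
          · rcases hz with hz | hz <;> subst hz <;>
              (intro hc; have := congrArg (Fin.val) hc; simp at this; omega)
        · left
          push_neg at hz
          exact Equiv.swap_apply_of_ne_of_ne hz.1 hz.2
      exact hd.commute.eq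
    · simp [dif_neg hy]
  · simp [dif_neg hx]

lemma repr_aux (n : ℕ) (w : Equiv.Perm (Fin n)) :
    ∀ N ρ, wtM ρ ≤ N → IsReducedDecomp n w ρ →
    ∃ ρ' : List ℕ, IsReducedDecomp n w ρ' ∧ CommEquiv ρ ρ' ∧
      ∀ (l r : List ℕ) (x y : ℕ), ρ' = l ++ [x, y] ++ r → y < x + 2 := by
  intro N
  induction N with
  | zero =>
    intro ρ hwt hred
    refine ⟨ρ, hred, Relation.ReflTransGen.refl, ?_⟩
    intro l r x y hρ
    by_contra hc
    have h1 := wtM_swap l r x y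
    have h2 : wtM ρ = 0 := Nat.le_zero.mp hwt
    rw [hρ] at h2
    omega
  | succ N ih =>
    intro ρ hwt hred
    by_cases hdone : ∀ (l r : List ℕ) (x y : ℕ), ρ = l ++ [x, y] ++ r → y < x + 2
    · exact ⟨ρ, hred, Relation.ReflTransGen.refl, hdone⟩
    · push_neg at hdone
      obtain ⟨l, r, x, y, hρ, hxy⟩ := hdone
      set ρ' := l ++ [y, x] ++ r with hρ'
      have hwt' : wtM ρ' ≤ N := by
        rw [hρ']
        have h1 := wtM_swap l r x y
        rw [hρ] at hwt
        omega
      have hred' : IsReducedDecomp n w ρ' := by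
        obtain ⟨hmem, hprod, hlen⟩ := hred
        refine ⟨?_, ?_, ?_⟩
        · intro s hs
          apply hmem
          rw [hρ]
          simp only [hρ', List.mem_append, List.mem_cons, List.mem_singleton] at hs ⊢
          tauto
        · rw [← hprod, hρ, hρ']
          simp only [List.map_append, List.prod_append, List.map_cons, List.map_nil,
            List.prod_cons, List.prod_nil, mul_one]
          rw [← adjT_comm n x y hxy]
        · rw [← hlen, hρ, hρ']; simp
      have hmove : ShortBraidMove ρ ρ' := ⟨l, r, x, y, Or.inl hxy, hρ, hρ'⟩
      obtain ⟨ρ'', h1, h2, h3⟩ := ih ρ' hwt' hred'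
      exact ⟨ρ'', h1, Relation.ReflTransGen.head hmove h2, h3⟩

/-- Every commutation class of reduced decompositions of `w` contains a
representative element: whenever two consecutive letters differ by at least 2, the
larger one comes first. -/
theorem exists_representative_element
    (n : ℕ) (w : Equiv.Perm (Fin n)) (ρ : List ℕ) (h : IsReducedDecomp n w ρ) :
    ∃ ρ' : List ℕ, IsReducedDecomp n w ρ' ∧ CommEquiv ρ ρ' ∧
      ∀ (l r : List ℕ) (x y : ℕ), ρ' = l ++ [x, y] ++ r → y < x + 2 := by
  exact repr_aux n w (wtM ρ) ρ le_rfl h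
end

section
/- The number of (2,1,2)-subnetworks of a reduced decomposition of w ∈ S_n is invariant under short braid moves: any two reduced decompositions of w in the same commutation class induce the same number of triples a < b < c whose induced reduced word is (2,1,2). -/
/-!
The transpositions `s_a` and `s_b` of a short braid move act on disjoint pairs of positions,
so they commute and neither changes whether, or with which label, the other step records a
letter on a set `A` of values. Swapping them therefore only exchanges the (at most two) letters
these steps contribute to the word induced on `A`. When `|A| = 3` at most one of them contributes,
as both together would swap four distinct values of `A`; so every induced word on three values,
and with it the number of `(2,1,2)`-subnetworks, is unchanged.
-/

section InducedWord

variable {n : ℕ}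

lemma adjT_apply_of_ne {a : ℕ} {p : Fin n} (h₁ : (p : ℕ) ≠ a - 1) (h₂ : (p : ℕ) ≠ a) :
    adjT n a p = p := by
  unfold adjT
  split
  · exact Equiv.swap_apply_of_ne_of_ne (Fin.ne_of_val_ne h₁) (Fin.ne_of_val_ne h₂)
  · rfl

lemma adjT_symm (a : ℕ) : (adjT n a).symm = adjT n a := by
  unfold adjT
  split
  · exact Equiv.symm_swap _ _
  · rfl

variable {a b : ℕ}

lemma adjT_commute_of_far (hab : a + 2 ≤ b ∨ b + 2 ≤ a) : Commute (adjT n a) (adjT n b) := by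
  refine Equiv.Perm.Disjoint.commute fun p => ?_
  by_cases hp : (p : ℕ) = a - 1 ∨ (p : ℕ) = a
  · by_cases ha : 1 ≤ a
    · exact .inr (adjT_apply_of_ne (by omega) (by omega))
    · left
      simp [adjT, ha]
  · push Not at hp
    exact .inl (adjT_apply_of_ne hp.1 hp.2)

lemma adjT_val_lt_iff_of_far (hab : a + 2 ≤ b ∨ b + 2 ≤ a) (p : Fin n) :
    (adjT n a p : ℕ) < b - 1 ↔ (p : ℕ) < b - 1 := by
  unfold adjT
  split
  · rename_i ha
    by_cases h₁ : p = ⟨a - 1, by omega⟩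
    · subst h₁
      rw [Equiv.swap_apply_left]
      dsimp only
      omega
    by_cases h₂ : p = ⟨a, ha.2⟩
    · subst h₂
      rw [Equiv.swap_apply_right]
      dsimp only
      omega
    rw [Equiv.swap_apply_of_ne_of_ne h₁ h₂]
  · rfl

def inducedLetter (A : Finset (Fin n)) (u : Equiv.Perm (Fin n)) (i : ℕ) : Option ℕ :=
  if h : 1 ≤ i ∧ i < n then
    if u ⟨i - 1, by omega⟩ ∈ A ∧ u ⟨i, h.2⟩ ∈ A then
      some ((A.filter fun x => (u.symm x : ℕ) < i - 1).card + 1)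
    else none
  else none

def inducedWordFrom (A : Finset (Fin n)) : Equiv.Perm (Fin n) → List ℕ → List ℕ
  | _, [] => []
  | u, i :: ρ => (inducedLetter A u i).toList ++ inducedWordFrom A (u * adjT n i) ρ

variable (A : Finset (Fin n))

lemma filterMap_range_inducedLetter (u : Equiv.Perm (Fin n)) (ρ : List ℕ) :
    (List.range ρ.length).filterMap
      (fun k => inducedLetter A (u * prefixPerm n ρ k) (ρ.getD k 0)) =
      inducedWordFrom A u ρ := by
  induction ρ generalizing u with
  | nil => rfl
  | cons i ρ ih =>
    rw [List.length_cons, List.range_succ_eq_map, List.filterMap_cons, List.filterMap_map]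
    have hshift : (fun k => inducedLetter A (u * prefixPerm n (i :: ρ) k)
        ((i :: ρ).getD k 0)) ∘ Nat.succ =
        fun k => inducedLetter A (u * adjT n i * prefixPerm n ρ k) (ρ.getD k 0) := by
      funext k
      simp [prefixPerm, List.take_succ_cons, mul_assoc]
    rw [hshift, ih, inducedWordFrom]
    simp only [prefixPerm, List.take_zero, List.map_nil, List.prod_nil, mul_one,
      List.getD_cons_zero]
    cases inducedLetter A u i <;> rfl

lemma inducedWord_eq_inducedWordFrom (ρ : List ℕ) :
    inducedWord n ρ A = inducedWordFrom A 1 ρ := by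
  rw [← filterMap_range_inducedLetter A 1 ρ]
  simp only [one_mul]
  rfl

lemma inducedWordFrom_append (u : Equiv.Perm (Fin n)) (l m : List ℕ) :
    inducedWordFrom A u (l ++ m) =
      inducedWordFrom A u l ++ inducedWordFrom A (u * (l.map (adjT n)).prod) m := by
  induction l generalizing u with
  | nil => simp [inducedWordFrom]
  | cons i l ih => simp [inducedWordFrom, ih, mul_assoc]

lemma inducedLetter_mul_adjT_of_far (hab : a + 2 ≤ b ∨ b + 2 ≤ a) (u : Equiv.Perm (Fin n)) :
    inducedLetter A (u * adjT n a) b = inducedLetter A u b := by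
  unfold inducedLetter
  by_cases hb : 1 ≤ b ∧ b < n
  · have hsymm (x : Fin n) : (u * adjT n a).symm x = adjT n a (u.symm x) := by
      rw [Equiv.Perm.mul_def, Equiv.symm_trans_apply, adjT_symm]
    simp only [dif_pos hb, Equiv.Perm.mul_apply, hsymm, adjT_val_lt_iff_of_far hab,
      adjT_apply_of_ne (p := ⟨b - 1, _⟩) (a := a) (by dsimp only; omega) (by dsimp only; omega),
      adjT_apply_of_ne (p := ⟨b, _⟩) (a := a) (by dsimp only; omega) (by dsimp only; omega)]
  · simp only [dif_neg hb]

/-- Two far-apart steps both recording a letter would swap four distinct values of `A`. -/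
lemma inducedLetter_eq_none_or_of_far (hA : A.card ≤ 3) (hab : a + 2 ≤ b ∨ b + 2 ≤ a)
    (u : Equiv.Perm (Fin n)) :
    inducedLetter A u a = none ∨ inducedLetter A u b = none := by
  unfold inducedLetter
  by_cases ha : 1 ≤ a ∧ a < n
  swap
  · exact .inl (dif_neg ha)
  by_cases hb : 1 ≤ b ∧ b < n
  swap
  · exact .inr (dif_neg hb)
  simp only [dif_pos ha, dif_pos hb]
  by_contra! hboth
  obtain ⟨⟨ha₁, ha₂⟩, -⟩ := ite_ne_right_iff.mp hboth.1
  obtain ⟨⟨hb₁, hb₂⟩, -⟩ := ite_ne_right_iff.mp hboth.2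
  have hsub : ({u ⟨a - 1, by omega⟩, u ⟨a, ha.2⟩, u ⟨b - 1, by omega⟩, u ⟨b, hb.2⟩} :
      Finset (Fin n)) ⊆ A := by
    simp [Finset.insert_subset_iff, ha₁, ha₂, hb₁, hb₂]
  have hcard : ({u ⟨a - 1, by omega⟩, u ⟨a, ha.2⟩, u ⟨b - 1, by omega⟩, u ⟨b, hb.2⟩} :
      Finset (Fin n)).card = 4 := by
    repeat rw [Finset.card_insert_of_notMem (by simp [Fin.ext_iff]; omega)]
    rfl
  have := Finset.card_le_card hsub
  omega

lemma inducedWordFrom_swap_of_far (hA : A.card ≤ 3) (hab : a + 2 ≤ b ∨ b + 2 ≤ a)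
    (u : Equiv.Perm (Fin n)) (r : List ℕ) :
    inducedWordFrom A u (a :: b :: r) = inducedWordFrom A u (b :: a :: r) := by
  simp only [inducedWordFrom, inducedLetter_mul_adjT_of_far A hab,
    inducedLetter_mul_adjT_of_far A hab.symm, mul_assoc, (adjT_commute_of_far hab).eq]
  rcases inducedLetter_eq_none_or_of_far A hA hab u with h | h <;> simp [h]

lemma inducedWord_eq_of_shortBraidMove {ρ ρ' : List ℕ} (hmove : ShortBraidMove ρ ρ')
    (hA : A.card ≤ 3) : inducedWord n ρ A = inducedWord n ρ' A := by
  obtain ⟨l, r, a, b, hab, rfl, rfl⟩ := hmove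
  simp only [inducedWord_eq_inducedWordFrom, List.append_assoc, List.cons_append,
    List.nil_append, inducedWordFrom_append, inducedWordFrom_swap_of_far A hA hab]

end InducedWord

lemma count212_eq_of_shortBraidMove (n : ℕ) {ρ ρ' : List ℕ} (hmove : ShortBraidMove ρ ρ') :
    count212 n ρ = count212 n ρ' := by
  unfold count212
  congr 1
  refine Finset.filter_congr fun A _ => and_congr_right fun hA => ?_
  rw [inducedWord_eq_of_shortBraidMove A hmove hA.le]

theorem count212_comm_invariant_general
    (n : ℕ) (ρ ρ' : List ℕ)
    (hcomm : CommEquiv ρ ρ') :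
    count212 n ρ = count212 n ρ' := by
  induction hcomm with
  | refl => rfl
  | tail _ hmove ih => exact ih.trans (count212_eq_of_shortBraidMove n hmove)

/-- The number of `(2,1,2)`-subnetworks is the same for any two reduced
decompositions of `w` in the same commutation class. -/
theorem count212_comm_invariant
    (n : ℕ) (w : Equiv.Perm (Fin n)) (ρ ρ' : List ℕ)
    (h : IsReducedDecomp n w ρ) (h' : IsReducedDecomp n w ρ')
    (hcomm : CommEquiv ρ ρ') :
    count212 n ρ = count212 n ρ' :=
  count212_comm_invariant_general n ρ ρ' hcomm
end

section
/- For any permutation w ∈ S_n and any reduced decomposition ρ of w, the number of (2,1,2)-subnetworks of ρ is at most N_{321}(w), the number of 321-patterns of w. -/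
/-!
Along a reduced word, the inversion set of the current arrangement, read as pairs of values,
gains exactly one pair at every step: each step changes it by one pair, and it must reach
`ρ.length` pairs. Hence every pair of values is swapped at most once, and every swapped pair
is an inversion of `w`. A `(2,1,2)`-subnetwork on `x < y < z` swaps three pairs of its
values, hence all three, so `z, y, x` occur in this order in `w`: a 321-pattern, and distinct
subnetworks give distinct patterns.
-/

open Finset Equiv

section ValueInversions

variable {n : ℕ}

/-- The pairs of values `x < y` that the arrangement `u` (position ↦ value) places in
the order `y, x`. -/
def valueInversions (u : Perm (Fin n)) : Finset (Fin n × Fin n) :=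
  {p | p.1 < p.2 ∧ u.symm p.2 < u.symm p.1}

lemma mem_valueInversions {u : Perm (Fin n)} {p : Fin n × Fin n} :
    p ∈ valueInversions u ↔ p.1 < p.2 ∧ u.symm p.2 < u.symm p.1 := by
  simp [valueInversions]

lemma card_valueInversions (u : Perm (Fin n)) : #(valueInversions u) = invCount n u := by
  refine card_bij' (fun p _ => (u.symm p.2, u.symm p.1)) (fun q _ => (u q.2, u q.1))
    ?_ ?_ (by simp) (by simp) <;> simp +contextual [mem_valueInversions]

lemma valueInversions_one : valueInversions (1 : Perm (Fin n)) = ∅ := by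
  ext p
  simp only [mem_valueInversions, Perm.one_def, refl_symm, refl_apply, notMem_empty, iff_false,
    not_and, not_lt]
  exact le_of_lt

lemma valueInversions_mul_swap_of_lt {u : Perm (Fin n)} {a b : Fin n} (hab : (a : ℕ) + 1 = b)
    (h : u a < u b) :
    valueInversions (u * swap a b) = insert (u a, u b) (valueInversions u) := by
  ext ⟨x, y⟩
  obtain ⟨p, rfl⟩ := u.surjective x
  obtain ⟨q, rfl⟩ := u.surjective y
  have hsymm : ∀ r, (u * swap a b).symm (u r) = swap a b r := fun r => by
    rw [Equiv.symm_apply_eq]; simp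
  simp only [mem_valueInversions, mem_insert, Prod.mk.injEq, hsymm, Equiv.symm_apply_apply,
    EmbeddingLike.apply_eq_iff_eq, swap_apply_def]
  split_ifs <;> subst_vars <;>
    simp only [Fin.lt_def, Fin.ext_iff, true_and, true_or, iff_true] at * <;> omega

lemma mk_apply_notMem_valueInversions (u : Perm (Fin n)) {a b : Fin n} (hab : a < b) :
    (u a, u b) ∉ valueInversions u := by
  simp [mem_valueInversions, hab.le]

lemma card_valueInversions_mul_swap_of_lt {u : Perm (Fin n)} {a b : Fin n}
    (hab : (a : ℕ) + 1 = b) (h : u a < u b) :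
    #(valueInversions (u * swap a b)) = #(valueInversions u) + 1 := by
  rw [valueInversions_mul_swap_of_lt hab h, card_insert_of_notMem]
  exact mk_apply_notMem_valueInversions _ (Fin.lt_def.2 (by omega))

lemma card_valueInversions_mul_swap_of_gt {u : Perm (Fin n)} {a b : Fin n}
    (hab : (a : ℕ) + 1 = b) (h : u b < u a) :
    #(valueInversions (u * swap a b)) + 1 = #(valueInversions u) := by
  have := card_valueInversions_mul_swap_of_lt (u := u * swap a b) hab (by simpa using h)
  rwa [mul_assoc, swap_mul_self, mul_one, eq_comm] at this

end ValueInversions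

lemma eq_self_of_le_succ {c : ℕ → ℕ} {L : ℕ} (h0 : c 0 = 0) (hL : c L = L)
    (hstep : ∀ k < L, c (k + 1) ≤ c k + 1) {k : ℕ} (hk : k ≤ L) : c k = k := by
  have hgrowth : ∀ j, k ≤ j → j ≤ L → c j ≤ c k + (j - k) := by
    intro j hkj
    induction j, hkj using Nat.le_induction with
    | base => simp
    | succ j hkj ih => intro hj; have := hstep j hj; have := ih (by omega); omega
  have hupper : ∀ j ≤ L, c j ≤ j := by
    intro j hj
    induction j with
    | zero => simp [h0]
    | succ j ih => have := hstep j hj; have := ih (by omega); omega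
  have := hgrowth L hk le_rfl
  have := hupper k hk
  omega

def swapPair? (n : ℕ) (ρ : List ℕ) (k : ℕ) : Option (Fin n × Fin n) :=
  if h : 1 ≤ ρ.getD k 0 ∧ ρ.getD k 0 < n then
    some (prefixPerm n ρ k ⟨ρ.getD k 0 - 1, by omega⟩,
      prefixPerm n ρ k ⟨ρ.getD k 0, h.2⟩)
  else none

section Words

variable {n : ℕ} {ρ : List ℕ}

lemma exists_swapPair_eq (hρ : ∀ r ∈ ρ, 1 ≤ r ∧ r < n) {k : ℕ} (hk : k < ρ.length) :
    ∃ a b : Fin n, (a : ℕ) + 1 = b ∧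
      swapPair? n ρ k = some (prefixPerm n ρ k a, prefixPerm n ρ k b) ∧
      prefixPerm n ρ (k + 1) = prefixPerm n ρ k * swap a b := by
  have hget : ρ.getD k 0 = ρ[k] := by simp [hk]
  have hi : 1 ≤ ρ.getD k 0 ∧ ρ.getD k 0 < n := hget ▸ hρ _ (List.getElem_mem hk)
  refine ⟨⟨ρ.getD k 0 - 1, by omega⟩, ⟨ρ.getD k 0, hi.2⟩, Nat.sub_add_cancel hi.1,
    by rw [swapPair?, dif_pos hi], ?_⟩
  rw [prefixPerm, prefixPerm, List.take_add_one, List.getElem?_eq_getElem hk, Option.toList_some,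
    List.map_append, List.prod_append, List.map_singleton, List.prod_singleton, ← hget, adjT,
    dif_pos hi]

lemma card_valueInversions_prefixPerm_succ_le (hρ : ∀ r ∈ ρ, 1 ≤ r ∧ r < n) {k : ℕ}
    (hk : k < ρ.length) :
    #(valueInversions (prefixPerm n ρ (k + 1))) ≤
      #(valueInversions (prefixPerm n ρ k)) + 1 := by
  obtain ⟨a, b, hab, -, hstep⟩ := exists_swapPair_eq hρ hk
  rw [hstep]
  have hne : a ≠ b := Fin.ne_of_val_ne (by omega)
  rcases lt_or_gt_of_ne ((prefixPerm n ρ k).injective.ne hne) with h | h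
  · rw [card_valueInversions_mul_swap_of_lt hab h]
  · have := card_valueInversions_mul_swap_of_gt hab h; omega

lemma length_inducedWord (A : Finset (Fin n)) :
    (inducedWord n ρ A).length =
      #{k ∈ range ρ.length | ∃ p ∈ swapPair? n ρ k, p.1 ∈ A ∧ p.2 ∈ A} := by
  rw [inducedWord, List.length_filterMap_eq_countP, ← Nat.count_eq_card_filter_range, Nat.count]
  congr 1
  funext k
  dsimp only [swapPair?]
  split_ifs <;> simp_all [-List.getD_eq_getElem?_getD]

end Words

namespace IsReducedDecomp

variable {n : ℕ} {w : Perm (Fin n)} {ρ : List ℕ}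

lemma prefixPerm_length (h : IsReducedDecomp n w ρ) : prefixPerm n ρ ρ.length = w := by
  rw [prefixPerm, List.take_length, h.2.1]

/-- Each step changes the number of inversions by one and the word ends with `ρ.length` of
them, so the number rises at every step. -/
lemma card_valueInversions_prefixPerm (h : IsReducedDecomp n w ρ) {k : ℕ}
    (hk : k ≤ ρ.length) : #(valueInversions (prefixPerm n ρ k)) = k :=
  eq_self_of_le_succ (c := fun k => #(valueInversions (prefixPerm n ρ k)))
    (by simp [prefixPerm, valueInversions_one])
    (by rw [h.prefixPerm_length, card_valueInversions, h.2.2])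
    (fun _ hk => card_valueInversions_prefixPerm_succ_le h.1 hk) hk

lemma valueInversions_prefixPerm_succ (h : IsReducedDecomp n w ρ) {k : ℕ}
    (hk : k < ρ.length) :
    ∃ p, swapPair? n ρ k = some p ∧ p ∉ valueInversions (prefixPerm n ρ k) ∧
      valueInversions (prefixPerm n ρ (k + 1)) =
        insert p (valueInversions (prefixPerm n ρ k)) := by
  obtain ⟨a, b, hab, hpair, hstep⟩ := exists_swapPair_eq h.1 hk
  have hne : a ≠ b := Fin.ne_of_val_ne (by omega)
  rcases lt_or_gt_of_ne ((prefixPerm n ρ k).injective.ne hne) with hlt | hgt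
  · exact ⟨_, hpair, mk_apply_notMem_valueInversions _ (Fin.lt_def.2 (by omega)),
      by rw [hstep, valueInversions_mul_swap_of_lt hab hlt]⟩
  · have hdrop := card_valueInversions_mul_swap_of_gt hab hgt
    rw [← hstep, h.card_valueInversions_prefixPerm hk,
      h.card_valueInversions_prefixPerm hk.le] at hdrop
    omega

lemma valueInversions_prefixPerm_mono (h : IsReducedDecomp n w ρ) {k k' : ℕ} (hkk' : k ≤ k')
    (hk' : k' ≤ ρ.length) :
    valueInversions (prefixPerm n ρ k) ⊆ valueInversions (prefixPerm n ρ k') := by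
  induction k', hkk' using Nat.le_induction with
  | base => rfl
  | succ j _ ih =>
    obtain ⟨p, -, -, hins⟩ := h.valueInversions_prefixPerm_succ hk'
    rw [hins]
    exact (ih (by omega)).trans (subset_insert _ _)

lemma swapPair_mem_valueInversions (h : IsReducedDecomp n w ρ) {k : ℕ} (hk : k < ρ.length)
    {p : Fin n × Fin n} (hp : swapPair? n ρ k = some p) : p ∈ valueInversions w := by
  obtain ⟨q, hq, -, hins⟩ := h.valueInversions_prefixPerm_succ hk
  obtain rfl : p = q := Option.some_injective _ (hp.symm.trans hq)
  rw [← h.prefixPerm_length]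
  exact h.valueInversions_prefixPerm_mono hk le_rfl (hins ▸ mem_insert_self _ _)

lemma eq_of_swapPair_eq (h : IsReducedDecomp n w ρ) {k k' : ℕ} (hk : k < ρ.length)
    (hk' : k' < ρ.length) {p : Fin n × Fin n} (hp : swapPair? n ρ k = some p)
    (hp' : swapPair? n ρ k' = some p) : k = k' := by
  have hfresh : ∀ {i j}, i < j → j < ρ.length → swapPair? n ρ i = some p →
      swapPair? n ρ j = some p → False := by
    intro i j hij hj hi hj'
    obtain ⟨q, hq, -, hins⟩ := h.valueInversions_prefixPerm_succ (hij.trans hj)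
    obtain ⟨q', hq', hnew, -⟩ := h.valueInversions_prefixPerm_succ hj
    obtain rfl : p = q := Option.some_injective _ (hi.symm.trans hq)
    obtain rfl : p = q' := Option.some_injective _ (hj'.symm.trans hq')
    exact hnew (h.valueInversions_prefixPerm_mono hij hj.le (hins ▸ mem_insert_self _ _))
  rcases lt_trichotomy k k' with hlt | heq | hgt
  · exact (hfresh hlt hk' hp hp').elim
  · exact heq
  · exact (hfresh hgt hk hp' hp).elim

lemma length_inducedWord_le (h : IsReducedDecomp n w ρ) (A : Finset (Fin n)) :
    (inducedWord n ρ A).length ≤ #{p ∈ valueInversions w | p.1 ∈ A ∧ p.2 ∈ A} := by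
  rw [length_inducedWord]
  calc _ ≤ #(map .some {p ∈ valueInversions w | p.1 ∈ A ∧ p.2 ∈ A}) := by
        refine card_le_card_of_injOn (swapPair? n ρ) (fun k hk => ?_)
          (fun k hk k' hk' hkk' => ?_)
        · simp only [coe_filter, mem_range] at hk
          obtain ⟨hk, p, hp, hA⟩ := hk
          simp only [coe_map, Set.mem_image, mem_coe, mem_filter]
          exact ⟨p, ⟨h.swapPair_mem_valueInversions hk hp, hA⟩, hp.symm⟩
        · simp only [coe_filter, mem_range] at hk hk'
          obtain ⟨hk, p, hp, -⟩ := hk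
          exact h.eq_of_swapPair_eq hk hk'.1 hp (hkk' ▸ hp)
    _ = _ := card_map _

end IsReducedDecomp

lemma Finset.exists_lt_lt_of_card_eq_three {α : Type*} [LinearOrder α] {s : Finset α}
    (hs : #s = 3) : ∃ x y z, x < y ∧ y < z ∧ s = {x, y, z} := by
  let f := s.orderEmbOfFin hs
  refine ⟨f 0, f 1, f 2, f.strictMono (by decide), f.strictMono (by decide), ?_⟩
  ext a
  rw [← mem_coe, ← s.range_orderEmbOfFin hs, Set.mem_range]
  simp [Fin.exists_fin_succ, f, eq_comm]

lemma mem_and_mem_of_three_le_card_filter {α : Type*} [LinearOrder α] {S : Finset (α × α)}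
    (hS : ∀ p ∈ S, p.1 < p.2) {x y z : α} (hxy : x < y) (hyz : y < z)
    (h : 3 ≤ #{p ∈ S | p.1 ∈ ({x, y, z} : Finset α) ∧ p.2 ∈ ({x, y, z} : Finset α)}) :
    (x, y) ∈ S ∧ (y, z) ∈ S := by
  have hsub : {p ∈ S | p.1 ∈ ({x, y, z} : Finset α) ∧ p.2 ∈ ({x, y, z} : Finset α)} ⊆
      {(x, y), (x, z), (y, z)} := by
    rintro ⟨a, b⟩ hp
    obtain ⟨hpS, ha, hb⟩ := mem_filter.1 hp
    have hab := hS _ hpS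
    simp only [mem_insert, mem_singleton, Prod.mk.injEq] at ha hb hab ⊢
    rcases ha with rfl | rfl | rfl <;> rcases hb with rfl | rfl | rfl <;>
      first | (exfalso; order) | simp
  have hall := eq_of_subset_of_card_le hsub (card_le_three.trans h)
  have hmem : ∀ q ∈ ({(x, y), (x, z), (y, z)} : Finset (α × α)), q ∈ S :=
    fun q hq => (mem_filter.1 (hall ▸ hq)).1
  exact ⟨hmem _ (by simp), hmem _ (by simp)⟩

/-- The number of `(2,1,2)`-subnetworks of any reduced decomposition of
`w` is at most the number of 321-patterns of `w`. -/
theorem count212_le_N321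
    (n : ℕ) (w : Equiv.Perm (Fin n)) (ρ : List ℕ) (h : IsReducedDecomp n w ρ) :
    count212 n ρ ≤ N321 n w := by
  refine card_le_card_of_surjOn (fun t => {w t.1, w t.2.1, w t.2.2}) fun A hA => ?_
  simp only [coe_filter, mem_univ, true_and] at hA
  obtain ⟨hcard, hword⟩ := hA
  obtain ⟨x, y, z, hxy, hyz, rfl⟩ := exists_lt_lt_of_card_eq_three hcard
  have h3 := h.length_inducedWord_le {x, y, z}
  rw [hword] at h3
  obtain ⟨hxy', hyz'⟩ := mem_and_mem_of_three_le_card_filter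
    (fun p hp => (mem_valueInversions.1 hp).1) hxy hyz h3
  rw [mem_valueInversions] at hxy' hyz'
  refine ⟨(w.symm z, w.symm y, w.symm x), ?_, ?_⟩
  · simp [hxy'.2, hyz'.2, hxy, hyz]
  · ext
    simp only [apply_symm_apply, mem_insert, mem_singleton]
    tauto
end

section
/- Let w₀ = (n, n-1, ..., 1) be the longest element of S_n, let ρ = (i_1, ..., i_l) with l = binom(n,2) be any reduced decomposition of w₀, and let X = {123212, 321232, 212321, 232123} (a set of reduced words of the longest element of S_4). Then the number of quadruples a < b < c < d whose induced reduced word under ρ lies in X equals Σ_{j=1}^{l} (i_j - 1)(n - i_j - 1) - 2·binom(n,4). -/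
/-!
A reduced word of `w₀` exchanges every pair of values exactly once: the parity of the number of
exchanges of a pair is forced by `w₀`, and there are exactly as many steps as pairs. Following the
relative order of the values of a set `A`, the steps exchanging two values of `A` therefore spell
a reduced word of the longest element of `S_{#A}`. For `#A = 4` a finite check shows that such a
word contains the letter `2` three times if it lies in `X` and twice otherwise, so the number of
`X`-quadruples is the total number of letters `2` in these words minus `2 * C(n, 4)`. Counting
the letters `2` step by step instead: a step with letter `i` induces a `2` on `A` exactly when `A`
consists of the two exchanged values, one value to their left and one to their right, and there
are `(i - 1) * (n - i - 1)` such sets.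
-/

open Finset in
lemma List.countP_range_eq_card_filter (p : ℕ → Bool) (m : ℕ) :
    (List.range m).countP p = #{k ∈ Finset.range m | p k} := by
  rw [Finset.card_def, Finset.filter_val, Finset.range_val, Multiset.range, Multiset.filter_coe,
    Multiset.coe_card, List.countP_eq_length_filter]
  simp

lemma List.mem_sections_replicate {α : Type*} {s w : List α} (h : ∀ a ∈ w, a ∈ s) :
    w ∈ (List.replicate w.length s).sections := by
  rw [List.mem_sections]
  induction w with
  | nil => exact .nil
  | cons a w ih => exact .cons (h a (by simp)) (ih fun b hb => h b (by simp [hb]))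

section Straddling

open Finset

variable {α : Type*} [DecidableEq α] {f : α → ℕ} {x y : α}

lemma card_straddling_eq {a b : α} (hxy : f y = f x + 1) (ha : f a < f x) (hb : f y < f b) :
    #({a, b, x, y} : Finset α) = 4 ∧ #{c ∈ ({a, b, x, y} : Finset α) | f c < f x} = 1 := by
  have hne : ∀ c d, f c ≠ f d → c ≠ d := fun c d h e => h (e ▸ rfl)
  have hfilter : {c ∈ ({a, b, x, y} : Finset α) | f c < f x} = {a} := by
    ext c
    simp only [mem_filter, mem_insert, mem_singleton]
    constructor
    · rintro ⟨rfl | rfl | rfl | rfl, h⟩ <;> first | rfl | omega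
    · rintro rfl
      exact ⟨.inl rfl, ha⟩
  refine ⟨?_, by rw [hfilter, card_singleton]⟩
  rw [card_insert_of_notMem (by
      simp only [mem_insert, mem_singleton, not_or]
      exact ⟨hne _ _ (by omega), hne _ _ (by omega), hne _ _ (by omega)⟩),
    card_insert_of_notMem (by
      simp only [mem_insert, mem_singleton, not_or]
      exact ⟨hne _ _ (by omega), hne _ _ (by omega)⟩),
    card_pair (hne _ _ (by omega))]

lemma exists_eq_straddling (hf : Function.Injective f) (hxy : f y = f x + 1) {A : Finset α}
    (h4 : #A = 4) (hx : x ∈ A) (hy : y ∈ A) (h1 : #{c ∈ A | f c < f x} = 1) :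
    ∃ a b, f a < f x ∧ f y < f b ∧ {a, b, x, y} = A := by
  have hcover : ∀ z, f z < f x ∨ z = x ∨ z = y ∨ f y < f z := fun z => by
    by_contra! hz
    rcases (show f z = f x ∨ f z = f y by omega) with h | h
    exacts [hz.2.1 (hf h), hz.2.2.1 (hf h)]
  obtain ⟨a, ha⟩ := card_eq_one.1 h1
  have haA : a ∈ A ∧ f a < f x := mem_filter.1 (ha ▸ mem_singleton_self a)
  have hrest : {c ∈ A | ¬f c < f x} = insert x (insert y {c ∈ A | f y < f c}) := by
    ext c
    simp only [mem_filter, mem_insert]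
    have := hcover c
    grind
  have hx' : x ∉ insert y {c ∈ A | f y < f c} := by
    simp only [mem_insert, mem_filter, not_or]
    exact ⟨fun h => by rw [h] at hxy; omega, fun h => by have := h.2; omega⟩
  have h2 := card_filter_add_card_filter_not (s := A) (fun c => f c < f x)
  rw [h1, hrest, card_insert_of_notMem hx', card_insert_of_notMem (by simp), h4] at h2
  obtain ⟨b, hb⟩ := card_eq_one.1 (show #{c ∈ A | f y < f c} = 1 by omega)
  have hbA : b ∈ A ∧ f y < f b := mem_filter.1 (hb ▸ mem_singleton_self b)
  refine ⟨a, b, haA.2, hbA.2, ?_⟩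
  ext c
  simp only [mem_insert, mem_singleton]
  constructor
  · rintro (rfl | rfl | rfl | rfl)
    exacts [haA.1, hbA.1, hx, hy]
  · intro hc
    rcases hcover c with h | h | h | h
    · exact .inl (mem_singleton.1 (ha ▸ mem_filter.2 ⟨hc, h⟩))
    · exact .inr (.inr (.inl h))
    · exact .inr (.inr (.inr h))
    · exact .inr (.inl (mem_singleton.1 (hb ▸ mem_filter.2 ⟨hc, h⟩)))

lemma injOn_straddling (hxy : f y = f x + 1) :
    Set.InjOn (fun p : α × α => ({p.1, p.2, x, y} : Finset α))
      {p | f p.1 < f x ∧ f y < f p.2} := by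
  rintro ⟨a, b⟩ ⟨h1, h2⟩ ⟨a', b'⟩ ⟨h3, h4⟩
    (heq : ({a, b, x, y} : Finset α) = {a', b', x, y})
  dsimp only at h1 h2 h3 h4
  have ha : a ∈ ({a', b', x, y} : Finset α) := heq ▸ by simp
  have hb : b ∈ ({a', b', x, y} : Finset α) := heq ▸ by simp
  simp only [mem_insert, mem_singleton] at ha hb
  rcases ha with rfl | rfl | rfl | rfl <;> rcases hb with rfl | rfl | rfl | rfl <;>
    first | rfl | omega

theorem card_four_subsets_straddling [Fintype α] (hf : Function.Injective f)
    (hxy : f y = f x + 1) :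
    #{A : Finset α | #A = 4 ∧ x ∈ A ∧ y ∈ A ∧ #{a ∈ A | f a < f x} = 1} =
      #{a | f a < f x} * #{b | f y < f b} := by
  rw [← card_product, ← card_image_of_injOn ((injOn_straddling hxy).mono fun p hp => by
    simpa using hp)]
  congr 1
  ext A
  simp only [mem_filter, mem_univ, true_and, mem_image, mem_product, Prod.exists]
  constructor
  · rintro ⟨h4, hx, hy, h1⟩
    obtain ⟨a, b, ha, hb, rfl⟩ := exists_eq_straddling hf hxy h4 hx hy h1
    exact ⟨a, b, ⟨ha, hb⟩, rfl⟩
  · rintro ⟨a, b, ⟨ha, hb⟩, rfl⟩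
    obtain ⟨h4, h1⟩ := card_straddling_eq hxy ha hb
    exact ⟨h4, by simp, by simp, h1⟩

end Straddling

namespace Subnetwork

open Finset

variable {n : ℕ} {ρ : List ℕ} {k r : ℕ} {A : Finset (Fin n)} {a b x y : Fin n}

/-! ### Positions of values and crossings -/

lemma adjT_of_valid {i : ℕ} (h : 1 ≤ i ∧ i < n) :
    adjT n i = Equiv.swap ⟨i - 1, by omega⟩ ⟨i, h.2⟩ :=
  dif_pos h

lemma adjT_of_not_valid {i : ℕ} (h : ¬(1 ≤ i ∧ i < n)) : adjT n i = 1 :=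
  dif_neg h

lemma adjT_symm (n i : ℕ) : (adjT n i).symm = adjT n i := by
  unfold adjT
  split_ifs <;> rfl

lemma val_adjT_apply {i : ℕ} (h : 1 ≤ i ∧ i < n) (p : Fin n) :
    (adjT n i p : ℕ) = Equiv.swap (i - 1) i (p : ℕ) := by
  rw [adjT_of_valid h, Equiv.swap_apply_def, Equiv.swap_apply_def]
  split_ifs <;> simp only [Fin.ext_iff] at * <;> omega

lemma prefixPerm_zero (ρ : List ℕ) : prefixPerm n ρ 0 = 1 := by
  simp [prefixPerm]

lemma prefixPerm_succ (ρ : List ℕ) (k : ℕ) :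
    prefixPerm n ρ (k + 1) = prefixPerm n ρ k * adjT n (ρ.getD k 0) := by
  unfold prefixPerm
  rcases lt_or_ge k ρ.length with hk | hk
  · rw [List.take_add_one, List.map_append, List.prod_append, List.getElem?_eq_getElem hk,
      List.getD_eq_getElem _ _ hk]
    simp
  · rw [List.take_of_length_le hk, List.take_of_length_le (by omega),
      List.getD_eq_default _ _ hk, adjT_of_not_valid (by omega), mul_one]

def posOf (ρ : List ℕ) (k : ℕ) (x : Fin n) : Fin n :=
  (prefixPerm n ρ k).symm x

lemma posOf_zero (x : Fin n) : posOf ρ 0 x = x := by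
  rw [posOf, prefixPerm_zero]
  rfl

lemma posOf_succ (x : Fin n) : posOf ρ (k + 1) x = adjT n (ρ.getD k 0) (posOf ρ k x) := by
  rw [posOf, prefixPerm_succ, Equiv.Perm.mul_def, Equiv.symm_trans_apply, adjT_symm, posOf]

lemma posOf_eq_iff {x p : Fin n} : posOf ρ k x = p ↔ x = prefixPerm n ρ k p :=
  Equiv.symm_apply_eq _

lemma posOf_injective : Function.Injective (posOf (n := n) ρ k) :=
  (prefixPerm n ρ k).symm.injective

lemma val_posOf_inj {x y : Fin n} : (posOf ρ k x : ℕ) = posOf ρ k y ↔ x = y :=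
  Fin.val_inj.trans posOf_injective.eq_iff

lemma posOf_length (h : IsReducedDecomp n Fin.revPerm ρ) (x : Fin n) :
    posOf ρ ρ.length x = x.rev := by
  rw [posOf, prefixPerm, List.take_length, h.2.1, Fin.revPerm_symm, Fin.revPerm_apply]

lemma getD_valid (h : ∀ r ∈ ρ, 1 ≤ r ∧ r < n) (hk : k < ρ.length) :
    1 ≤ ρ.getD k 0 ∧ ρ.getD k 0 < n :=
  h _ (List.getD_eq_getElem ρ 0 hk ▸ List.getElem_mem hk)

/-- Step `k` of `ρ` exchanges the value `x`, at (0-based) position `ρ_k - 1`, with the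
value `y` at position `ρ_k`. -/
def SwapsAt (ρ : List ℕ) (k : ℕ) (x y : Fin n) : Prop :=
  (posOf ρ k x : ℕ) + 1 = ρ.getD k 0 ∧ (posOf ρ k y : ℕ) = ρ.getD k 0

def Crosses (ρ : List ℕ) (k : ℕ) (x y : Fin n) : Prop :=
  SwapsAt ρ k x y ∨ SwapsAt ρ k y x

instance (ρ : List ℕ) (k : ℕ) (x y : Fin n) : Decidable (SwapsAt ρ k x y) :=
  inferInstanceAs (Decidable (_ ∧ _))

instance (ρ : List ℕ) (k : ℕ) (x y : Fin n) : Decidable (Crosses ρ k x y) :=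
  inferInstanceAs (Decidable (_ ∨ _))

lemma exists_swapsAt (h : 1 ≤ ρ.getD k 0 ∧ ρ.getD k 0 < n) :
    ∃ x y : Fin n, SwapsAt ρ k x y :=
  ⟨prefixPerm n ρ k ⟨ρ.getD k 0 - 1, by omega⟩, prefixPerm n ρ k ⟨ρ.getD k 0, h.2⟩, by
    simp only [SwapsAt, posOf, Equiv.symm_apply_apply, and_true]; omega⟩

namespace SwapsAt

variable {x y : Fin n} (hs : SwapsAt ρ k x y)
include hs

lemma valid : 1 ≤ ρ.getD k 0 ∧ ρ.getD k 0 < n := by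
  have := (posOf ρ k y).isLt
  unfold SwapsAt at hs
  omega

lemma ne : x ≠ y := by
  rintro rfl
  unfold SwapsAt at hs
  omega

lemma crosses_iff {a b : Fin n} : Crosses ρ k a b ↔ a = x ∧ b = y ∨ a = y ∧ b = x := by
  simp only [Crosses, SwapsAt, ← val_posOf_inj (ρ := ρ) (k := k)]
  unfold SwapsAt at hs
  omega

lemma val_posOf_succ (z : Fin n) :
    (posOf ρ (k + 1) z : ℕ) = Equiv.swap (posOf ρ k x : ℕ) (posOf ρ k y) (posOf ρ k z) := by
  rw [posOf_succ, val_adjT_apply hs.valid]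
  unfold SwapsAt at hs
  rw [hs.2, ← hs.1, Nat.add_sub_cancel]

end SwapsAt

lemma not_crosses_of_not_valid (h : ¬(1 ≤ ρ.getD k 0 ∧ ρ.getD k 0 < n)) (x y : Fin n) :
    ¬Crosses ρ k x y := by
  rintro (hs | hs) <;> exact h hs.valid

lemma posOf_succ_lt_posOf_succ_iff (x y : Fin n) :
    posOf ρ (k + 1) x < posOf ρ (k + 1) y ↔
      (posOf ρ k x < posOf ρ k y ↔ ¬Crosses ρ k x y) := by
  by_cases hv : 1 ≤ ρ.getD k 0 ∧ ρ.getD k 0 < n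
  · simp only [Fin.lt_def, posOf_succ, val_adjT_apply hv, Crosses, SwapsAt,
      Equiv.swap_apply_def]
    split_ifs <;> omega
  · rw [posOf_succ, posOf_succ, adjT_of_not_valid hv]
    simp [not_crosses_of_not_valid hv]

lemma even_card_crosses_iff (x y : Fin n) (m : ℕ) :
    Even #{k ∈ range m | Crosses ρ k x y} ↔ (posOf ρ m x < posOf ρ m y ↔ x < y) := by
  induction m with
  | zero => simp [posOf_zero]
  | succ m ih =>
    rw [range_add_one, filter_insert, posOf_succ_lt_posOf_succ_iff]
    by_cases hc : Crosses ρ m x y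
    · rw [if_pos hc, card_insert_of_notMem (by simp), Nat.even_add_one, ih]
      tauto
    · rw [if_neg hc, ih]
      tauto

lemma SwapsAt.card_crosses_filter {x y : Fin n} (hs : SwapsAt ρ k x y) (A : Finset (Fin n)) :
    #{p ∈ {p ∈ A ×ˢ A | p.1 < p.2} | Crosses ρ k p.1 p.2} =
      if x ∈ A ∧ y ∈ A then 1 else 0 := by
  split_ifs with hA
  · refine card_eq_one.2 ⟨(min x y, max x y), ?_⟩
    ext ⟨a, b⟩
    simp only [mem_filter, mem_product, mem_singleton, Prod.mk.injEq, hs.crosses_iff]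
    have := hs.ne
    grind
  · rw [card_eq_zero, filter_eq_empty_iff]
    rintro ⟨a, b⟩ hp hc
    simp only [mem_filter, mem_product] at hp
    rw [hs.crosses_iff] at hc
    grind

lemma invCount_revPerm : invCount n Fin.revPerm = n.choose 2 := by
  unfold invCount
  simp only [Fin.revPerm_apply, Fin.rev_lt_rev, and_self]
  simpa using Fintype.card_product_filter_lt (α := Fin n)

theorem card_crosses_eq_one (h : IsReducedDecomp n Fin.revPerm ρ) {x y : Fin n} (hxy : x < y) :
    #{k ∈ range ρ.length | Crosses ρ k x y} = 1 := by
  set P := {p ∈ (univ : Finset (Fin n)) ×ˢ (univ : Finset (Fin n)) | p.1 < p.2}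
  have hpos : ∀ p ∈ P, 1 ≤ #{k ∈ range ρ.length | Crosses ρ k p.1 p.2} := by
    intro p hp
    rw [Nat.one_le_iff_ne_zero]
    intro h0
    have := (even_card_crosses_iff p.1 p.2 ρ.length).1 (by rw [h0]; decide)
    rw [posOf_length h, posOf_length h, Fin.rev_lt_rev] at this
    have := (mem_filter.1 hp).2
    grind
  have hstep : ∀ k ∈ range ρ.length, #{p ∈ P | Crosses ρ k p.1 p.2} = 1 := by
    intro k hk
    obtain ⟨x, y, hs⟩ := exists_swapsAt (getD_valid h.1 (mem_range.1 hk))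
    simpa only [mem_univ, and_self, if_true] using hs.card_crosses_filter univ
  have hsum : ∑ p ∈ P, 1 = ∑ p ∈ P, #{k ∈ range ρ.length | Crosses ρ k p.1 p.2} :=
    calc ∑ p ∈ P, 1 = ∑ k ∈ range ρ.length, #{p ∈ P | Crosses ρ k p.1 p.2} := by
          rw [sum_congr rfl hstep, sum_const, sum_const, card_range, h.2.2, invCount_revPerm,
            card_product_filter_lt, card_univ, Fintype.card_fin]
      _ = _ := (sum_card_bipartiteAbove_eq_sum_card_bipartiteBelow _).symm
  exact ((sum_eq_sum_iff_of_le hpos).1 hsum (x, y) (by simp [P, hxy])).symm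

/-! ### Relative ranks and the induced word -/

def rank (ρ : List ℕ) (A : Finset (Fin n)) (k : ℕ) (a : Fin n) : ℕ :=
  #{b ∈ A | posOf ρ k b < posOf ρ k a}

lemma rank_lt_card (ha : a ∈ A) : rank ρ A k a < #A :=
  card_lt_card (filter_ssubset.2 ⟨a, ha, lt_irrefl _⟩)

lemma rank_lt_rank (ha : a ∈ A) (hab : posOf ρ k a < posOf ρ k b) :
    rank ρ A k a < rank ρ A k b := by
  refine card_lt_card ((ssubset_iff_of_subset fun c hc => ?_).2 ⟨a, ?_, by simp⟩)
  · simp only [mem_filter] at hc ⊢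
    exact ⟨hc.1, hc.2.trans hab⟩
  · exact mem_filter.2 ⟨ha, hab⟩

lemma rank_injOn : Set.InjOn (rank ρ A k) A := by
  intro a ha b hb hab
  by_contra hne
  rcases (posOf_injective.ne hne).lt_or_gt with hlt | hlt
  · exact (rank_lt_rank ha hlt).ne hab
  · exact (rank_lt_rank hb hlt).ne hab.symm

lemma rank_zero_add_rank_length (h : IsReducedDecomp n Fin.revPerm ρ) (ha : a ∈ A) :
    rank ρ A 0 a + rank ρ A ρ.length a + 1 = #A := by
  have hgt : {b ∈ A | ¬b < a} = insert a {b ∈ A | a < b} := by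
    ext b
    simp only [mem_filter, mem_insert, not_lt]
    grind
  simp only [rank, posOf_zero, posOf_length h, Fin.rev_lt_rev]
  rw [← card_filter_add_card_filter_not (s := A) (· < a), hgt, card_insert_of_notMem (by simp)]
  ring

lemma exists_rank_zero_eq (ρ : List ℕ) (j : Fin #A) : ∃ a ∈ A, rank ρ A 0 a = j := by
  obtain ⟨a, ha, hj⟩ := surj_on_of_inj_on_of_card_le (s := A) (t := range #A)
    (fun a _ => rank ρ A 0 a) (fun a ha => mem_range.2 (rank_lt_card ha))
    (fun a b ha hb hab => rank_injOn ha hb hab) (by simp) j (mem_range.2 j.isLt)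
  exact ⟨a, ha, hj.symm⟩

lemma rank_of_posOf_add_one (hb : b ∈ A) (h : (posOf ρ k b : ℕ) + 1 = posOf ρ k a) :
    rank ρ A k a = rank ρ A k b + 1 := by
  rw [rank, rank, ← card_insert_of_notMem (s := {c ∈ A | posOf ρ k c < posOf ρ k b}) (a := b)
    (by simp)]
  congr 1
  ext c
  by_cases hcb : c = b
  · subst hcb
    simp only [mem_filter, mem_insert, true_or, iff_true, hb, true_and, Fin.lt_def]
    omega
  · have := (val_posOf_inj (ρ := ρ) (k := k)).not.2 hcb
    simp only [mem_filter, mem_insert, hcb, false_or, Fin.lt_def]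
    exact and_congr_right fun _ => by omega

lemma rank_succ_of_forall_not_crosses (h : ∀ b ∈ A, ¬Crosses ρ k b a) :
    rank ρ A (k + 1) a = rank ρ A k a := by
  unfold rank
  congr 1
  refine filter_congr fun b hb => ?_
  simp [posOf_succ_lt_posOf_succ_iff, h b hb]

namespace SwapsAt

variable (hs : SwapsAt ρ k x y)
include hs

lemma rank_right (hx : x ∈ A) : rank ρ A k y = rank ρ A k x + 1 :=
  rank_of_posOf_add_one hx (hs.1.trans hs.2.symm)

lemma rank_succ_left (hy : y ∈ A) : rank ρ A (k + 1) x = rank ρ A k x + 1 := by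
  have hyx : ¬posOf ρ k y < posOf ρ k x := by
    have := hs.1
    have := hs.2
    rw [Fin.lt_def]
    omega
  rw [rank, rank, ← card_insert_of_notMem (s := {c ∈ A | posOf ρ k c < posOf ρ k x}) (a := y)
    (by simp only [mem_filter, hyx, and_false, not_false_eq_true])]
  congr 1
  ext b
  simp only [mem_filter, mem_insert, posOf_succ_lt_posOf_succ_iff, hs.crosses_iff, hs.ne,
    and_false, false_or, and_true]
  grind

lemma rank_succ_right (hy : y ∈ A) : rank ρ A (k + 1) y = rank ρ A k x := by
  have h := rank_of_posOf_add_one (A := A) hy (by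
    rw [hs.val_posOf_succ, hs.val_posOf_succ, Equiv.swap_apply_left, Equiv.swap_apply_right]
    exact hs.1.trans hs.2.symm : (posOf ρ (k + 1) y : ℕ) + 1 = posOf ρ (k + 1) x)
  have := hs.rank_succ_left hy
  omega

lemma rank_succ (hx : x ∈ A) (hy : y ∈ A) (ha : a ∈ A) :
    rank ρ A (k + 1) a = Equiv.swap (rank ρ A k x) (rank ρ A k x + 1) (rank ρ A k a) := by
  obtain rfl | hax := eq_or_ne a x
  · rw [hs.rank_succ_left hy, Equiv.swap_apply_left]
  obtain rfl | hay := eq_or_ne a y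
  · rw [hs.rank_succ_right hy, ← hs.rank_right hx, Equiv.swap_apply_right]
  rw [Equiv.swap_apply_of_ne_of_ne (rank_injOn.ne ha hx hax)
      (hs.rank_right hx ▸ rank_injOn.ne ha hy hay),
    rank_succ_of_forall_not_crosses fun b _ hc => ?_]
  rcases hs.crosses_iff.1 hc with ⟨-, rfl⟩ | ⟨-, rfl⟩ <;> contradiction

end SwapsAt

def inducedLetter (ρ : List ℕ) (A : Finset (Fin n)) (k : ℕ) : Option ℕ :=
  let u := prefixPerm n ρ k
  let i := ρ.getD k 0
  if h : 1 ≤ i ∧ i < n then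
    if u ⟨i - 1, by omega⟩ ∈ A ∧ u ⟨i, h.2⟩ ∈ A then
      some ((A.filter fun x => (u.symm x : ℕ) < i - 1).card + 1)
    else none
  else none

lemma inducedWord_eq_filterMap (ρ : List ℕ) (A : Finset (Fin n)) :
    inducedWord n ρ A = (List.range ρ.length).filterMap (inducedLetter ρ A) :=
  rfl

lemma inducedLetter_of_not_valid (h : ¬(1 ≤ ρ.getD k 0 ∧ ρ.getD k 0 < n)) :
    inducedLetter ρ A k = none :=
  dif_neg h

lemma SwapsAt.inducedLetter_eq (hs : SwapsAt ρ k x y) :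
    inducedLetter ρ A k = if x ∈ A ∧ y ∈ A then some (rank ρ A k x + 1) else none := by
  have hv := hs.valid
  have hx : prefixPerm n ρ k ⟨ρ.getD k 0 - 1, by omega⟩ = x :=
    (posOf_eq_iff.1 (Fin.ext (by have := hs.1; simp only; omega))).symm
  have hy : prefixPerm n ρ k ⟨ρ.getD k 0, hv.2⟩ = y := (posOf_eq_iff.1 (Fin.ext hs.2)).symm
  have hrank :
      #{b ∈ A | ((prefixPerm n ρ k).symm b : ℕ) < ρ.getD k 0 - 1} = rank ρ A k x := by
    refine congrArg card (filter_congr fun b _ => ?_)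
    have := hs.1
    rw [Fin.lt_def]
    change (posOf ρ k b : ℕ) < _ ↔ _
    omega
  simp only [inducedLetter, dif_pos hv, hx, hy, hrank]

lemma not_crosses_of_inducedLetter_eq_none (hl : inducedLetter ρ A k = none) (ha : a ∈ A)
    {b : Fin n} (hb : b ∈ A) : ¬Crosses ρ k b a := by
  by_cases hv : 1 ≤ ρ.getD k 0 ∧ ρ.getD k 0 < n
  · obtain ⟨x, y, hs⟩ := exists_swapsAt hv
    rw [hs.inducedLetter_eq, ite_eq_right_iff] at hl
    rw [hs.crosses_iff]
    rintro (⟨rfl, rfl⟩ | ⟨rfl, rfl⟩) <;> simp_all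
  · exact not_crosses_of_not_valid hv _ _

lemma exists_swapsAt_of_inducedLetter_eq_some (hl : inducedLetter ρ A k = some r) :
    ∃ x y, SwapsAt ρ k x y ∧ x ∈ A ∧ y ∈ A ∧ r = rank ρ A k x + 1 := by
  by_cases hv : 1 ≤ ρ.getD k 0 ∧ ρ.getD k 0 < n
  · obtain ⟨x, y, hs⟩ := exists_swapsAt hv
    rw [hs.inducedLetter_eq] at hl
    split_ifs at hl with hA
    exact ⟨x, y, hs, hA.1, hA.2, (Option.some_inj.1 hl).symm⟩
  · simp [inducedLetter_of_not_valid hv] at hl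

lemma inducedLetter_bounds (hl : inducedLetter ρ A k = some r) : 1 ≤ r ∧ r < #A := by
  obtain ⟨x, y, hs, hx, hy, rfl⟩ := exists_swapsAt_of_inducedLetter_eq_some hl
  have := hs.rank_right hx ▸ rank_lt_card (k := k) hy
  omega

lemma rank_succ_of_inducedLetter_eq_none (hl : inducedLetter ρ A k = none) (ha : a ∈ A) :
    rank ρ A (k + 1) a = rank ρ A k a :=
  rank_succ_of_forall_not_crosses fun _ hb => not_crosses_of_inducedLetter_eq_none hl ha hb

lemma rank_succ_of_inducedLetter_eq_some (hl : inducedLetter ρ A k = some r) (ha : a ∈ A) :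
    rank ρ A (k + 1) a = Equiv.swap (r - 1) r (rank ρ A k a) := by
  obtain ⟨x, y, hs, hx, hy, rfl⟩ := exists_swapsAt_of_inducedLetter_eq_some hl
  rw [hs.rank_succ hx hy ha, Nat.add_sub_cancel]

theorem val_symm_prod_inducedLetters (ha : a ∈ A) (m : ℕ) :
    ((((List.range m).filterMap (inducedLetter ρ A)).map (adjT #A)).prod.symm
      ⟨rank ρ A 0 a, rank_lt_card ha⟩ : ℕ) = rank ρ A m a := by
  induction m with
  | zero => rfl
  | succ m ih =>
    rw [List.range_succ, List.filterMap_append, List.map_append, List.prod_append,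
      Equiv.Perm.mul_def, Equiv.symm_trans_apply]
    cases hl : inducedLetter ρ A m with
    | none =>
      simp only [List.filterMap_cons, hl, List.filterMap_nil, List.map_nil, List.prod_nil]
      rw [rank_succ_of_inducedLetter_eq_none hl ha, ← ih]
      rfl
    | some r =>
      simp only [List.filterMap_cons, hl, List.filterMap_nil, List.map_cons, List.map_nil,
        List.prod_cons, List.prod_nil, mul_one]
      rw [adjT_symm, val_adjT_apply (inducedLetter_bounds hl), ih,
        rank_succ_of_inducedLetter_eq_some hl ha]

theorem prod_inducedWord (h : IsReducedDecomp n Fin.revPerm ρ) (A : Finset (Fin n)) :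
    ((inducedWord n ρ A).map (adjT #A)).prod = Fin.revPerm := by
  rw [← Equiv.symm_symm ((inducedWord n ρ A).map (adjT #A)).prod, ← Fin.revPerm_symm]
  congr 1
  ext j
  obtain ⟨a, ha, hj⟩ := exists_rank_zero_eq ρ j
  obtain rfl : j = ⟨_, rank_lt_card ha⟩ := Fin.ext hj.symm
  have := rank_zero_add_rank_length h ha
  rw [inducedWord_eq_filterMap, val_symm_prod_inducedLetters ha, Fin.revPerm_apply, Fin.val_rev]
  omega

theorem length_inducedWord (h : IsReducedDecomp n Fin.revPerm ρ) (A : Finset (Fin n)) :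
    (inducedWord n ρ A).length = (#A).choose 2 := by
  rw [inducedWord_eq_filterMap, List.length_filterMap_eq_countP,
    List.countP_range_eq_card_filter, ← card_product_filter_lt]
  set P := {p ∈ A ×ˢ A | p.1 < p.2}
  calc #{k ∈ range ρ.length | (inducedLetter ρ A k).isSome}
      = ∑ k ∈ range ρ.length, #{p ∈ P | Crosses ρ k p.1 p.2} := by
        rw [card_filter]
        refine sum_congr rfl fun k hk => ?_
        obtain ⟨x, y, hs⟩ := exists_swapsAt (getD_valid h.1 (mem_range.1 hk))
        rw [hs.card_crosses_filter, hs.inducedLetter_eq]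
        split_ifs <;> simp_all
    _ = ∑ p ∈ P, #{k ∈ range ρ.length | Crosses ρ k p.1 p.2} :=
        (sum_card_bipartiteAbove_eq_sum_card_bipartiteBelow _).symm
    _ = #P := by
        rw [card_eq_sum_ones P]
        exact sum_congr rfl fun p hp => card_crosses_eq_one h (mem_filter.1 hp).2

theorem isReducedDecomp_inducedWord (h : IsReducedDecomp n Fin.revPerm ρ)
    (A : Finset (Fin n)) : IsReducedDecomp #A Fin.revPerm (inducedWord n ρ A) := by
  refine ⟨fun r hr => ?_, prod_inducedWord h A, by rw [length_inducedWord h, invCount_revPerm]⟩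
  obtain ⟨k, -, hl⟩ := List.mem_filterMap.1 hr
  exact inducedLetter_bounds hl

set_option maxRecDepth 10000 in
theorem count_two_of_isReducedDecomp_four {w : List ℕ}
    (hw : IsReducedDecomp 4 Fin.revPerm w) :
    w.count 2 =
      if w ∈ [[1,2,3,2,1,2], [3,2,1,2,3,2], [2,1,2,3,2,1], [2,3,2,1,2,3]] then 3 else 2 := by
  have hlen : w.length = 6 := by rw [hw.2.2, invCount_revPerm]; rfl
  have hmem : w ∈ (List.replicate 6 [1, 2, 3]).sections :=
    hlen ▸ List.mem_sections_replicate fun r hr => by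
      have := hw.1 r hr
      simp only [List.mem_cons, List.not_mem_nil, or_false]
      omega
  have key : ∀ w ∈ (List.replicate 6 [1, 2, 3]).sections,
      (w.map (adjT 4)).prod = Fin.revPerm →
      w.count 2 =
        if w ∈ [[1,2,3,2,1,2], [3,2,1,2,3,2], [2,1,2,3,2,1], [2,3,2,1,2,3]] then 3 else 2 := by
    decide
  exact key w hmem hw.2.1

/-! ### Counting the letters `2` -/

lemma card_filter_posOf (P : ℕ → Prop) [DecidablePred P] :
    #{a : Fin n | P (posOf ρ k a)} = #{i : Fin n | P i} :=
  card_equiv (prefixPerm n ρ k).symm fun a => by simp only [mem_filter, mem_univ, true_and]; rfl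

theorem card_inducedLetter_eq_two (hv : 1 ≤ ρ.getD k 0 ∧ ρ.getD k 0 < n) :
    #{A : Finset (Fin n) | #A = 4 ∧ inducedLetter ρ A k = some 2} =
      (ρ.getD k 0 - 1) * (n - 1 - ρ.getD k 0) := by
  obtain ⟨x, y, hs⟩ := exists_swapsAt hv
  have hletter : ∀ A : Finset (Fin n), inducedLetter ρ A k = some 2 ↔
      x ∈ A ∧ y ∈ A ∧ #{a ∈ A | (posOf ρ k a : ℕ) < posOf ρ k x} = 1 := by
    intro A
    rw [hs.inducedLetter_eq]
    split_ifs with hA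
    · simp only [Option.some_inj, hA, true_and]
      exact Nat.add_right_cancel_iff
    · simp only [false_iff]
      tauto
  simp only [hletter]
  have hlt : #{i : Fin n | (i : ℕ) < posOf ρ k x} = posOf ρ k x := by
    rw [Fin.card_filter_val_lt]
    omega
  have hgt : #{i : Fin n | (posOf ρ k y : ℕ) < i} = n - 1 - posOf ρ k y := by
    rw [← Fin.card_Ioi]
    congr 1
    ext i
    simp only [mem_filter, mem_univ, true_and, mem_Ioi, Fin.lt_def]
  rw [card_four_subsets_straddling (f := fun a => (posOf ρ k a : ℕ))
    (Fin.val_injective.comp posOf_injective) (hs.2.trans hs.1.symm),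
    card_filter_posOf (· < (posOf ρ k x : ℕ)),
    card_filter_posOf ((posOf ρ k y : ℕ) < ·), hlt, hgt, hs.2, ← hs.1, Nat.add_sub_cancel]

theorem sum_count_two_inducedWord (hρ : ∀ r ∈ ρ, 1 ≤ r ∧ r < n) :
    ∑ A : Finset (Fin n) with #A = 4, ((inducedWord n ρ A).count 2 : ℤ) =
      (ρ.map fun i : ℕ => ((i : ℤ) - 1) * (n - i - 1)).sum := by
  calc ∑ A : Finset (Fin n) with #A = 4, ((inducedWord n ρ A).count 2 : ℤ)
      = ∑ A : Finset (Fin n) with #A = 4, ∑ k ∈ range ρ.length,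
          if inducedLetter ρ A k = some 2 then (1 : ℤ) else 0 := by
        refine sum_congr rfl fun A _ => ?_
        rw [inducedWord_eq_filterMap, List.count_filterMap, List.countP_range_eq_card_filter,
          natCast_card_filter]
        simp
    _ = ∑ k ∈ range ρ.length,
          (#{A : Finset (Fin n) | #A = 4 ∧ inducedLetter ρ A k = some 2} : ℤ) := by
        rw [sum_comm]
        refine sum_congr rfl fun k _ => ?_
        rw [← filter_filter, natCast_card_filter]
    _ = ∑ k ∈ range ρ.length, ((ρ.getD k 0 : ℤ) - 1) * (n - ρ.getD k 0 - 1) := by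
        refine sum_congr rfl fun k hk => ?_
        have hv := getD_valid hρ (mem_range.1 hk)
        rw [card_inducedLetter_eq_two hv, Nat.cast_mul, Nat.cast_sub hv.1,
          Nat.cast_sub (by omega : ρ.getD k 0 ≤ n - 1), Nat.cast_sub (by omega : 1 ≤ n)]
        ring
    _ = _ := by
        rw [sum_range, ← Fin.sum_univ_fun_getElem]
        refine sum_congr rfl fun k _ => ?_
        rw [List.getD_eq_getElem]

end Subnetwork

/-- For any reduced decomposition `ρ = (i_1, …, i_l)` of the longest
element `w₀ = (n, n-1, …, 1)` of `S_n` and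
`X = {123212, 321232, 212321, 232123}`, the number of `X`-subnetwork quadruples equals
`Σ_j (i_j - 1)(n - i_j - 1) - 2 * binom(n, 4)`. -/
theorem countX_subnetworks_longest_element
    (n : ℕ) (ρ : List ℕ)
    (h : IsReducedDecomp n (Fin.revPerm : Equiv.Perm (Fin n)) ρ) :
    ((Finset.univ.filter fun A : Finset (Fin n) =>
        A.card = 4 ∧ inducedWord n ρ A ∈
          [[1,2,3,2,1,2], [3,2,1,2,3,2], [2,1,2,3,2,1], [2,3,2,1,2,3]]).card : ℤ) =
      (ρ.map fun i => ((i : ℤ) - 1) * ((n : ℤ) - (i : ℤ) - 1)).sum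
        - 2 * (n.choose 4 : ℤ) := by
  have hX : ∀ A ∈ Finset.univ.filter fun A : Finset (Fin n) => A.card = 4,
      (if inducedWord n ρ A ∈ [[1,2,3,2,1,2], [3,2,1,2,3,2], [2,1,2,3,2,1], [2,3,2,1,2,3]]
        then 1 else 0 : ℤ) = (inducedWord n ρ A).count 2 - 2 := by
    intro A hA
    have hw := Subnetwork.isReducedDecomp_inducedWord h A
    rw [(Finset.mem_filter.1 hA).2] at hw
    rw [Subnetwork.count_two_of_isReducedDecomp_four hw]
    split_ifs <;> norm_num
  rw [← Finset.filter_filter, Finset.natCast_card_filter, Finset.sum_congr rfl hX,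
    Finset.sum_sub_distrib, Subnetwork.sum_count_two_inducedWord h.1, Finset.sum_const,
    Finset.univ_filter_card_eq, Finset.card_powersetCard, Finset.card_univ, Fintype.card_fin]
  -- the statement maps over the coercion of `ρ` to `List ℤ`, which elaborates to a bind
  simp only [List.bind_eq_flatMap, List.pure_def, ← List.map_eq_flatMap, List.map_map,
    Function.comp_def, Int.nsmul_eq_mul]
  ring
end

section
/- For a permutation p ∈ S_m contained as a pattern in w ∈ S_n, and X a commutation class of reduced decompositions of p: the number of X-subnetworks is the same for all reduced decompositions of w in a single commutation class. That is, a short braid move on a reduced decomposition of w does not change the number of m-element subsets of values whose induced reduced word lies in X. -/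
section Aux

/-- The step contribution, as a list (empty or singleton). -/
def stepF (n : ℕ) (A : Finset (Fin n)) (u : Equiv.Perm (Fin n)) (i : ℕ) : List ℕ :=
  if h : 1 ≤ i ∧ i < n then
    if u ⟨i - 1, by omega⟩ ∈ A ∧ u ⟨i, h.2⟩ ∈ A then
      [(A.filter fun x => (u.symm x : ℕ) < i - 1).card + 1]
    else []
  else []

/-- Recursive form of the induced word, with accumulated permutation `u`. -/
def iw (n : ℕ) (A : Finset (Fin n)) : Equiv.Perm (Fin n) → List ℕ → List ℕ
  | _, [] => []
  | u, i :: t => stepF n A u i ++ iw n A (u * adjT n i) t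

lemma iw_nil (n : ℕ) (A : Finset (Fin n)) (u : Equiv.Perm (Fin n)) : iw n A u [] = [] := rfl

lemma iw_cons (n : ℕ) (A : Finset (Fin n)) (u : Equiv.Perm (Fin n)) (i : ℕ) (t : List ℕ) :
    iw n A u (i :: t) = stepF n A u i ++ iw n A (u * adjT n i) t := rfl

lemma prefixPerm_zero (n : ℕ) (ρ : List ℕ) : prefixPerm n ρ 0 = 1 := rfl

lemma prefixPerm_cons_succ (n : ℕ) (i : ℕ) (t : List ℕ) (k : ℕ) :
    prefixPerm n (i :: t) (k + 1) = adjT n i * prefixPerm n t k := by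
  simp [prefixPerm, List.take_succ_cons]

def optF (n : ℕ) (A : Finset (Fin n)) (u : Equiv.Perm (Fin n)) (i : ℕ) : Option ℕ :=
  if h : 1 ≤ i ∧ i < n then
    if u ⟨i - 1, by omega⟩ ∈ A ∧ u ⟨i, h.2⟩ ∈ A then
      some ((A.filter fun x => (u.symm x : ℕ) < i - 1).card + 1)
    else none
  else none

lemma stepF_eq_toList (n : ℕ) (A : Finset (Fin n)) (u : Equiv.Perm (Fin n)) (i : ℕ) :
    stepF n A u i = (optF n A u i).toList := by
  unfold stepF optF
  split_ifs <;> rfl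

lemma iw_spec (n : ℕ) (A : Finset (Fin n)) (ρ : List ℕ) : ∀ u : Equiv.Perm (Fin n),
    ((List.range ρ.length).filterMap fun k =>
      optF n A (u * prefixPerm n ρ k) (ρ.getD k 0)) = iw n A u ρ := by
  induction ρ with
  | nil => intro u; simp [iw]
  | cons i t ih =>
    intro u
    rw [List.length_cons, List.range_succ_eq_map, List.filterMap_cons, List.filterMap_map]
    have hstep : ((fun k => optF n A (u * prefixPerm n (i :: t) k) ((i :: t).getD k 0)) ∘
        fun k => k + 1) =
        fun k => optF n A ((u * adjT n i) * prefixPerm n t k) (t.getD k 0) := by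
      funext k
      simp only [Function.comp_apply, prefixPerm_cons_succ, List.getD_cons_succ, mul_assoc]
    rw [show (Nat.succ = fun k => k + 1) from rfl] at *
    rw [hstep, ih]
    have hhead : optF n A (u * prefixPerm n (i :: t) 0) ((i :: t).getD 0 0) = optF n A u i := by
      simp [prefixPerm_zero]
    simp only [hhead]
    show _ = stepF n A u i ++ iw n A (u * adjT n i) t
    rw [stepF_eq_toList]
    cases optF n A u i <;> rfl

lemma inducedWord_eq_iw (n : ℕ) (ρ : List ℕ) (A : Finset (Fin n)) :
    inducedWord n ρ A = iw n A 1 ρ := by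
  rw [← iw_spec n A ρ 1]
  unfold inducedWord optF
  simp only [one_mul]

lemma iw_append (n : ℕ) (A : Finset (Fin n)) (l s : List ℕ) :
    ∀ u, iw n A u (l ++ s) = iw n A u l ++ iw n A (u * (l.map (adjT n)).prod) s := by
  induction l with
  | nil => intro u; simp [iw]
  | cons i t ih =>
    intro u
    rw [List.cons_append, iw_cons, ih, iw_cons, List.map_cons, List.prod_cons,
      List.append_assoc, mul_assoc]

lemma adjT_inv (n i : ℕ) : (adjT n i)⁻¹ = adjT n i := by
  unfold adjT
  split
  · exact Equiv.swap_inv _ _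
  · exact inv_one

lemma adjT_apply_of_ne_s16 (n i : ℕ) (x : Fin n) (h1 : (x : ℕ) ≠ i - 1) (h2 : (x : ℕ) ≠ i) :
    adjT n i x = x := by
  unfold adjT
  split
  · exact Equiv.swap_apply_of_ne_of_ne (by simp [Fin.ext_iff]; omega) (by simp [Fin.ext_iff]; omega)
  · rfl

lemma adjT_coe_lt_iff (n b : ℕ) (c : ℕ) (hc : c ≠ b - 1 ∧ c ≠ b) (y : Fin n)
    (hside : (b - 1 < c ∧ b < c) ∨ (b - 1 ≥ c ∧ b ≥ c) ∨ ¬(1 ≤ b ∧ b < n)) :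
    ((adjT n b y : Fin n) : ℕ) < c ↔ (y : ℕ) < c := by
  by_cases hb : 1 ≤ b ∧ b < n
  · by_cases h1 : y = (⟨b - 1, by omega⟩ : Fin n)
    · subst h1
      unfold adjT
      rw [dif_pos hb, Equiv.swap_apply_left]
      show b < c ↔ b - 1 < c
      omega
    · by_cases h2 : y = (⟨b, hb.2⟩ : Fin n)
      · subst h2
        unfold adjT
        rw [dif_pos hb, Equiv.swap_apply_right]
        show b - 1 < c ↔ b < c
        omega
      · rw [adjT_apply_of_ne_s16 n b y (fun hh => h1 (Fin.ext hh)) (fun hh => h2 (Fin.ext hh))]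
  · unfold adjT
    rw [dif_neg hb]
    rfl

lemma stepF_mul_adjT (n : ℕ) (A : Finset (Fin n)) (u : Equiv.Perm (Fin n)) (a b : ℕ)
    (hab : a + 2 ≤ b ∨ b + 2 ≤ a) :
    stepF n A (u * adjT n b) a = stepF n A u a := by
  by_cases ha : 1 ≤ a ∧ a < n
  · have hfix1 : (u * adjT n b) ⟨a - 1, by omega⟩ = u ⟨a - 1, by omega⟩ := by
      rw [Equiv.Perm.mul_apply, adjT_apply_of_ne_s16 n b _ (by simp; omega) (by simp; omega)]
    have hfix2 : (u * adjT n b) ⟨a, ha.2⟩ = u ⟨a, ha.2⟩ := by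
      rw [Equiv.Perm.mul_apply, adjT_apply_of_ne_s16 n b _ (by simp; omega) (by simp; omega)]
    have hsymm : ∀ x : Fin n, (u * adjT n b).symm x = adjT n b (u.symm x) := by
      intro x
      rw [← Equiv.Perm.inv_def, mul_inv_rev, adjT_inv, Equiv.Perm.mul_apply]
      rfl
    have hfilter : (A.filter fun x => (((u * adjT n b).symm x : Fin n) : ℕ) < a - 1) =
        (A.filter fun x => ((u.symm x : Fin n) : ℕ) < a - 1) := by
      apply Finset.filter_congr
      intro x _
      rw [hsymm]
      apply adjT_coe_lt_iff
      · omega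
      · by_cases hb : 1 ≤ b ∧ b < n
        · rcases hab with h | h
          · right; left; omega
          · left; omega
        · right; right; exact hb
    unfold stepF
    rw [dif_pos ha, dif_pos ha, hfix1, hfix2, hfilter]
  · unfold stepF
    rw [dif_neg ha, dif_neg ha]

lemma adjT_comm_s16 (n : ℕ) (a b : ℕ) (hab : a + 2 ≤ b ∨ b + 2 ≤ a) :
    adjT n a * adjT n b = adjT n b * adjT n a := by
  by_cases ha : 1 ≤ a ∧ a < n
  · by_cases hb : 1 ≤ b ∧ b < n
    · have hd : (adjT n a).Disjoint (adjT n b) := by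
        intro x
        by_cases hx : (x : ℕ) = a - 1 ∨ (x : ℕ) = a
        · right; exact adjT_apply_of_ne_s16 n b x (by omega) (by omega)
        · left; exact adjT_apply_of_ne_s16 n a x (by omega) (by omega)
      exact hd.commute.eq
    · unfold adjT; rw [dif_neg hb]; simp
  · unfold adjT; rw [dif_neg ha]; simp

end Aux

lemma stepF_cases (n : ℕ) (A : Finset (Fin n)) (u : Equiv.Perm (Fin n)) (i : ℕ) :
    stepF n A u i = [] ∨ ∃ x, stepF n A u i = [x] := by
  unfold stepF
  split_ifs <;> simp

lemma stepF_gap (n : ℕ) (A : Finset (Fin n)) (u : Equiv.Perm (Fin n)) (a b : ℕ)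
    (hab : a + 2 ≤ b) (α β : ℕ) (hA : stepF n A u a = [α]) (hB : stepF n A u b = [β]) :
    α + 2 ≤ β := by
  unfold stepF at hA hB
  by_cases ha : 1 ≤ a ∧ a < n
  swap
  · rw [dif_neg ha] at hA; exact absurd hA (by simp)
  by_cases hb : 1 ≤ b ∧ b < n
  swap
  · rw [dif_neg hb] at hB; exact absurd hB (by simp)
  rw [dif_pos ha] at hA
  rw [dif_pos hb] at hB
  by_cases hca : u ⟨a - 1, by omega⟩ ∈ A ∧ u ⟨a, ha.2⟩ ∈ A
  swap
  · rw [if_neg hca] at hA; exact absurd hA (by simp)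
  rw [if_pos hca] at hA
  by_cases hcb : u ⟨b - 1, by omega⟩ ∈ A ∧ u ⟨b, hb.2⟩ ∈ A
  swap
  · rw [if_neg hcb] at hB; exact absurd hB (by simp)
  rw [if_pos hcb] at hB
  simp only [List.cons.injEq, and_true] at hA hB
  set Sa := A.filter fun x => ((u.symm x : Fin n) : ℕ) < a - 1 with hSa
  set Sb := A.filter fun x => ((u.symm x : Fin n) : ℕ) < b - 1 with hSb
  have hx : u ⟨a - 1, by omega⟩ ∈ Sb := by
    rw [hSb, Finset.mem_filter]
    refine ⟨hca.1, ?_⟩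
    rw [Equiv.symm_apply_apply]
    show a - 1 < b - 1
    omega
  have hy : u ⟨a, ha.2⟩ ∈ Sb := by
    rw [hSb, Finset.mem_filter]
    refine ⟨hca.2, ?_⟩
    rw [Equiv.symm_apply_apply]
    show a < b - 1
    omega
  have hxy : u ⟨a - 1, by omega⟩ ≠ u ⟨a, ha.2⟩ := by
    simp only [ne_eq, EmbeddingLike.apply_eq_iff_eq, Fin.mk.injEq]
    omega
  have hxa : u ⟨a - 1, by omega⟩ ∉ Sa := by
    rw [hSa, Finset.mem_filter]
    rintro ⟨-, h⟩
    rw [Equiv.symm_apply_apply] at h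
    have h' : a - 1 < a - 1 := h
    omega
  have hya : u ⟨a, ha.2⟩ ∉ Sa := by
    rw [hSa, Finset.mem_filter]
    rintro ⟨-, h⟩
    rw [Equiv.symm_apply_apply] at h
    have h' : a < a - 1 := h
    omega
  have hsub : insert (u ⟨a - 1, by omega⟩) (insert (u ⟨a, ha.2⟩) Sa) ⊆ Sb := by
    intro x hx'
    rcases Finset.mem_insert.mp hx' with h | h
    · rw [h]; exact hx
    rcases Finset.mem_insert.mp h with h | h
    · rw [h]; exact hy
    · rw [hSa, Finset.mem_filter] at h
      rw [hSb, Finset.mem_filter]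
      exact ⟨h.1, by omega⟩
  have hcard : Sa.card + 2 ≤ Sb.card := by
    have h1 : (insert (u ⟨a - 1, by omega⟩) (insert (u ⟨a, ha.2⟩) Sa)).card = Sa.card + 2 := by
      rw [Finset.card_insert_of_notMem (by
        rw [Finset.mem_insert]; push_neg; exact ⟨hxy, hxa⟩),
        Finset.card_insert_of_notMem hya]
    rw [← h1]
    exact Finset.card_le_card hsub
  omega

lemma induced_rel (n : ℕ) (ρ ρ' : List ℕ) (hmove : ShortBraidMove ρ ρ') (A : Finset (Fin n)) :
    inducedWord n ρ' A = inducedWord n ρ A ∨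
      ShortBraidMove (inducedWord n ρ A) (inducedWord n ρ' A) := by
  obtain ⟨l, r, a, b, hab, h1, h2⟩ := hmove
  subst h1; subst h2
  rw [inducedWord_eq_iw, inducedWord_eq_iw]
  rw [show l ++ [a, b] ++ r = l ++ ([a, b] ++ r) by simp,
      show l ++ [b, a] ++ r = l ++ ([b, a] ++ r) by simp]
  rw [iw_append n A l ([a, b] ++ r) 1, iw_append n A l ([b, a] ++ r) 1]
  set u := (1 : Equiv.Perm (Fin n)) * (l.map (adjT n)).prod with hu
  have e1 : iw n A u ([a, b] ++ r) =
      stepF n A u a ++ (stepF n A (u * adjT n a) b ++ iw n A (u * adjT n a * adjT n b) r) := by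
    simp [iw]
  have e2 : iw n A u ([b, a] ++ r) =
      stepF n A u b ++ (stepF n A (u * adjT n b) a ++ iw n A (u * adjT n b * adjT n a) r) := by
    simp [iw]
  rw [e1, e2, stepF_mul_adjT n A u a b hab, stepF_mul_adjT n A u b a hab.symm,
      show u * adjT n b * adjT n a = u * adjT n a * adjT n b by
        simp only [mul_assoc, adjT_comm_s16 n b a hab.symm]]
  set iwl := iw n A 1 l with hiwl
  set T := iw n A (u * adjT n a * adjT n b) r with hT
  rcases stepF_cases n A u a with hLa | ⟨α, hLa⟩
  · left; rw [hLa]; simp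
  rcases stepF_cases n A u b with hLb | ⟨β, hLb⟩
  · left; rw [hLb]; simp
  right
  refine ⟨iwl, T, α, β, ?_, ?_, ?_⟩
  · rcases hab with h | h
    · exact Or.inl (stepF_gap n A u a b h α β hLa hLb)
    · exact Or.inr (stepF_gap n A u b a h β α hLb hLa)
  · rw [hLa, hLb]; simp
  · rw [hLa, hLb]; simp

/-- If `p ∈ S_m` occurs as a pattern in `w ∈ S_n` and `X` is a commutation
class of reduced decompositions of `p`, then a short braid move on a reduced
decomposition of `w` does not change the number of `X`-subnetworks. -/
theorem countX_subnetworks_short_braid_invariant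
    (n m : ℕ) (w : Equiv.Perm (Fin n)) (p : Equiv.Perm (Fin m))
    (f : Fin m → Fin n) (hf : StrictMono f)
    (hpat : ∀ a b : Fin m, p a < p b ↔ w (f a) < w (f b))
    (X : Set (List ℕ))
    (hXred : ∀ x ∈ X, IsReducedDecomp m p x)
    (hXclass : ∀ x ∈ X, ∀ y : List ℕ, y ∈ X ↔ CommEquiv x y)
    (ρ ρ' : List ℕ)
    (hρ : IsReducedDecomp n w ρ) (hρ' : IsReducedDecomp n w ρ')
    (hmove : ShortBraidMove ρ ρ') :
    Nat.card {A : Finset (Fin n) // A.card = m ∧ inducedWord n ρ A ∈ X} =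
      Nat.card {A : Finset (Fin n) // A.card = m ∧ inducedWord n ρ' A ∈ X} := by
  have hsymm : ShortBraidMove ρ' ρ := by
    obtain ⟨l, r, a, b, hab, h1, h2⟩ := hmove
    exact ⟨l, r, b, a, hab.symm, h2, h1⟩
  have key : ∀ A : Finset (Fin n), (inducedWord n ρ A ∈ X ↔ inducedWord n ρ' A ∈ X) := by
    intro A
    rcases induced_rel n ρ ρ' hmove A with h | h
    · rw [h]
    constructor
    · intro hx
      exact (hXclass _ hx _).mpr (Relation.ReflTransGen.single h)
    · intro hx
      rcases induced_rel n ρ' ρ hsymm A with h' | h'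
      · rw [h']; exact hx
      · exact (hXclass _ hx _).mpr (Relation.ReflTransGen.single h')
  exact Nat.card_congr (Equiv.subtypeEquivRight fun A =>
    and_congr_right fun _ => key A)
end
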